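/- arXiv:1402.1451 — 11 statements merged into one kernel-verified Lean document; each statement's English description precedes it below -/
import Mathlib

section
/- Let q be a real number with 0 < q < 1. There exists a constant c > 0, depending only on q, such that for all real numbers a, b one has | |a+b|^q - |a|^q | ≤ c·|b|^q, and moreover, for all real a ≠ 0 and all real b, | |a+b|^q - |a|^q | ≤ c·|a|^{q-1}·|b| (hence the left-hand side is bounded by c·min{|b|^q, |a|^{q-1}|b|} whenever a ≠ 0). -/
/-!
The constant `c = 1` works for both bounds. Both reduce, via `||a + b| - |a|| ≤ |b|`, to
estimates for `t ↦ t ^ q` on `[0, ∞)`: it is `q`-Hölder with constant `1` by subadditivity of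
`t ↦ t ^ q`, and `|x ^ q - y ^ q| ≤ y ^ (q - 1) * |x - y|` because `t ^ q` lies between `1` and `t`
for `t = x / y`.
-/

namespace Real

lemma abs_rpow_sub_rpow_le_abs_sub_rpow {x y q : ℝ} (hx : 0 ≤ x) (hy : 0 ≤ y) (hq0 : 0 ≤ q)
    (hq1 : q ≤ 1) : |x ^ q - y ^ q| ≤ |x - y| ^ q := by
  wlog hxy : y ≤ x generalizing x y
  · rw [abs_sub_comm, abs_sub_comm x]
    exact this hy hx (le_of_not_ge hxy)
  have hsub : x ^ q ≤ (x - y) ^ q + y ^ q := by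
    simpa using rpow_add_le_add_rpow (sub_nonneg.2 hxy) hy hq0 hq1
  rw [abs_of_nonneg (sub_nonneg.2 (rpow_le_rpow hy hxy hq0)), abs_of_nonneg (sub_nonneg.2 hxy)]
  linarith

lemma abs_rpow_sub_one_le_abs_sub_one {t q : ℝ} (ht : 0 ≤ t) (hq0 : 0 ≤ q) (hq1 : q ≤ 1) :
    |t ^ q - 1| ≤ |t - 1| := by
  rcases le_total t 1 with h | h
  · have hlow := self_le_rpow_of_le_one ht h hq1
    have hupp := rpow_le_one ht h hq0
    rw [abs_of_nonpos (by linarith), abs_of_nonpos (by linarith)]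
    linarith
  · have hlow := one_le_rpow h hq0
    have hupp := rpow_le_self_of_one_le h hq1
    rw [abs_of_nonneg (by linarith), abs_of_nonneg (by linarith)]
    linarith

lemma abs_rpow_sub_rpow_le_rpow_sub_one_mul {x y q : ℝ} (hx : 0 ≤ x) (hy : 0 < y) (hq0 : 0 ≤ q)
    (hq1 : q ≤ 1) : |x ^ q - y ^ q| ≤ y ^ (q - 1) * |x - y| := by
  have hyq : 0 < y ^ q := rpow_pos_of_pos hy q
  have hleft : x ^ q - y ^ q = y ^ q * ((x / y) ^ q - 1) := by
    rw [div_rpow hx hy.le]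
    field_simp
  have hright : y ^ (q - 1) * (x - y) = y ^ q * (x / y - 1) := by
    rw [rpow_sub_one hy.ne']
    field_simp
  rw [← abs_of_pos (rpow_pos_of_pos hy (q - 1)), ← abs_mul, hleft, hright, abs_mul, abs_mul]
  exact mul_le_mul_of_nonneg_left
    (abs_rpow_sub_one_le_abs_sub_one (div_nonneg hx hy.le) hq0 hq1) (abs_nonneg _)

end Real

/-- Lemma 2.2 of the paper, case `0 < q < 1`: there is a constant `c > 0`,
depending only on `q`, such that `||a+b|^q - |a|^q| ≤ c * |b|^q` for all reals,
and `||a+b|^q - |a|^q| ≤ c * |a|^(q-1) * |b|` whenever `a ≠ 0`. -/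
theorem stmt_0 (q : ℝ) (hq0 : 0 < q) (hq1 : q < 1) :
    ∃ c : ℝ, 0 < c ∧
      (∀ a b : ℝ, |(|a + b| ^ q - |a| ^ q)| ≤ c * |b| ^ q) ∧
      (∀ a b : ℝ, a ≠ 0 → |(|a + b| ^ q - |a| ^ q)| ≤ c * |a| ^ (q - 1) * |b|) := by
  have habs (a b : ℝ) : |(|a + b| - |a|)| ≤ |b| := by
    simpa using abs_abs_sub_abs_le_abs_sub (a + b) a
  refine ⟨1, one_pos, fun a b ↦ ?_, fun a b ha ↦ ?_⟩
  · calc |(|a + b| ^ q - |a| ^ q)| ≤ |(|a + b| - |a|)| ^ q :=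
          Real.abs_rpow_sub_rpow_le_abs_sub_rpow (abs_nonneg _) (abs_nonneg _) hq0.le hq1.le
      _ ≤ |b| ^ q := Real.rpow_le_rpow (abs_nonneg _) (habs a b) hq0.le
      _ = 1 * |b| ^ q := (one_mul _).symm
  · calc |(|a + b| ^ q - |a| ^ q)| ≤ |a| ^ (q - 1) * |(|a + b| - |a|)| :=
          Real.abs_rpow_sub_rpow_le_rpow_sub_one_mul (abs_nonneg _) (abs_pos.2 ha) hq0.le hq1.le
      _ ≤ |a| ^ (q - 1) * |b| := mul_le_mul_of_nonneg_left (habs a b) (by positivity)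
      _ = 1 * |a| ^ (q - 1) * |b| := by rw [one_mul]
end

section
/- Let q be a real number with q > 2. There exists a constant C > 0, depending only on q, such that for all real numbers a, b one has | |a+b|^q - |a|^q - q·|a|^{q-2}·a·b | ≤ C·( |a|^{q-2}·b² + |b|^q ). -/
/-!
The function `f x = |x| ^ q` is differentiable with `f' x = q * (|x| ^ (q - 2) * x)`, and
`x ↦ |x| ^ (q - 2) * x` has derivative `(q - 1) * |x| ^ (q - 2)`, hence is
`(q - 1) * M ^ (q - 2)`-Lipschitz on `[-M, M]`. Applying the mean value theorem to the remainder
`t ↦ f (a + t) - f' a * t` on `[0, b]` bounds it by `q (q - 1) (|a| + |b|) ^ (q - 2) b²`, and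
`(|a| + |b|) ^ (q - 2) ≤ 2 ^ (q - 2) (|a| ^ (q - 2) + |b| ^ (q - 2))` with
`|b| ^ (q - 2) b² = |b| ^ q` finishes.
-/

open Set Filter Topology

lemma Real.add_rpow_le_two_rpow_mul_rpow_add_rpow {p a b : ℝ} (ha : 0 ≤ a) (hb : 0 ≤ b)
    (hp : 0 ≤ p) : (a + b) ^ p ≤ 2 ^ p * (a ^ p + b ^ p) := calc
  (a + b) ^ p ≤ (2 * max a b) ^ p := by
    rw [two_mul]; gcongr; exacts [le_max_left a b, le_max_right a b]
  _ = 2 ^ p * max a b ^ p := Real.mul_rpow zero_le_two (le_max_of_le_left ha)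
  _ = 2 ^ p * max (a ^ p) (b ^ p) := by rw [Real.rpow_max ha hb hp]
  _ ≤ 2 ^ p * (a ^ p + b ^ p) := by
    gcongr; exact max_le_add_of_nonneg (by positivity) (by positivity)

lemma hasDerivAt_abs_rpow_mul_self {p : ℝ} (hp : 0 < p) (x : ℝ) :
    HasDerivAt (fun y : ℝ ↦ |y| ^ p * y) ((p + 1) * |x| ^ p) x := by
  rcases eq_or_ne x 0 with rfl | hx
  · rw [abs_zero, Real.zero_rpow hp.ne', mul_zero, hasDerivAt_iff_tendsto_slope_zero]
    have hcont : Tendsto (fun t : ℝ ↦ |t| ^ p) (𝓝[≠] 0) (𝓝 0) := by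
      simpa [Real.zero_rpow hp.ne'] using
        ((continuous_abs.rpow_const fun _ ↦ Or.inr hp.le).tendsto (0 : ℝ)).mono_left
          nhdsWithin_le_nhds
    refine hcont.congr' (eventually_nhdsWithin_of_forall fun t ht ↦ ?_)
    simp only [zero_add, abs_zero, Real.zero_rpow hp.ne', zero_mul, sub_zero, smul_eq_mul]
    field_simp [show t ≠ 0 from ht]
  · have h := ((hasDerivAt_abs hx).rpow_const (p := p) (Or.inl (abs_ne_zero.2 hx))).fun_mul
      (hasDerivAt_id' x)
    have hpow : |x| ^ (p - 1) * |x| = |x| ^ p := by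
      rw [← Real.rpow_add_one (abs_ne_zero.2 hx), sub_add_cancel]
    refine h.congr_deriv ?_
    calc _ = p * (|x| ^ (p - 1) * (SignType.sign x * x)) + |x| ^ p := by ring
      _ = (p + 1) * |x| ^ p := by rw [sign_mul_self, hpow]; ring

lemma abs_abs_rpow_mul_self_sub_le {p M x y : ℝ} (hp : 0 < p) (hx : |x| ≤ M) (hy : |y| ≤ M) :
    |(|x| ^ p * x - |y| ^ p * y)| ≤ (p + 1) * M ^ p * |x - y| := by
  have hM : ∀ z ∈ Icc (-M) M, ‖(p + 1) * |z| ^ p‖ ≤ (p + 1) * M ^ p := fun z hz ↦ by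
    rw [Real.norm_of_nonneg (by positivity)]
    gcongr
    exact abs_le.2 hz
  exact Convex.norm_image_sub_le_of_norm_hasDerivWithin_le
    (fun z _ ↦ (hasDerivAt_abs_rpow_mul_self hp z).hasDerivWithinAt) hM (convex_Icc _ _)
    (abs_le.1 hy) (abs_le.1 hx)

lemma abs_sub_sub_mul_le_of_abs_deriv_sub_le {f f' : ℝ → ℝ} {a b K : ℝ}
    (hf : ∀ x, HasDerivAt f (f' x) x) (hK : ∀ t ∈ uIcc 0 b, |f' (a + t) - f' a| ≤ K) :
    |f (a + b) - f a - f' a * b| ≤ K * |b| := by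
  have hg : ∀ t ∈ uIcc 0 b, HasDerivWithinAt (fun t ↦ f (a + t) - f' a * t)
      (f' (a + t) - f' a) (uIcc 0 b) t := fun t _ ↦ by
    simpa using (((hf (a + t)).comp_const_add a t).fun_sub
      ((hasDerivAt_id t).const_mul (f' a))).hasDerivWithinAt
  simpa [sub_right_comm] using Convex.norm_image_sub_le_of_norm_hasDerivWithin_le hg hK
    (convex_uIcc 0 b) left_mem_uIcc right_mem_uIcc

lemma abs_abs_add_rpow_sub_sub_le {q : ℝ} (hq : 2 < q) (a b : ℝ) :
    |(|a + b| ^ q - |a| ^ q - q * |a| ^ (q - 2) * a * b)| ≤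
      q * (q - 1) * (|a| + |b|) ^ (q - 2) * b ^ 2 := by
  have hq0 : 0 < q := by linarith
  have hK : ∀ t ∈ uIcc 0 b, |q * |a + t| ^ (q - 2) * (a + t) - q * |a| ^ (q - 2) * a| ≤
      q * (q - 1) * (|a| + |b|) ^ (q - 2) * |b| := fun t ht ↦ by
    have htb : |t| ≤ |b| := by simpa using abs_sub_left_of_mem_uIcc ht
    have hlip := abs_abs_rpow_mul_self_sub_le (by linarith : 0 < q - 2)
      ((abs_add_le a t).trans (by gcongr)) (le_add_of_nonneg_right (abs_nonneg b))
    rw [add_sub_cancel_left, show q - 2 + 1 = q - 1 by ring] at hlip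
    calc _ = |q * (|a + t| ^ (q - 2) * (a + t) - |a| ^ (q - 2) * a)| := by congr 1; ring
      _ = q * |(|a + t| ^ (q - 2) * (a + t) - |a| ^ (q - 2) * a)| := by
          rw [abs_mul, abs_of_pos hq0]
      _ ≤ q * ((q - 1) * (|a| + |b|) ^ (q - 2) * |b|) := by
          gcongr
          exact hlip.trans (mul_le_mul_of_nonneg_left htb
            (mul_nonneg (by linarith) (by positivity)))
      _ = _ := by ring
  calc _ ≤ q * (q - 1) * (|a| + |b|) ^ (q - 2) * |b| * |b| := by
        simpa [mul_assoc] using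
          abs_sub_sub_mul_le_of_abs_deriv_sub_le (fun x ↦ hasDerivAt_abs_rpow x (by linarith)) hK
    _ = _ := by rw [mul_assoc _ |b|, ← sq, sq_abs]

/-- Inequality (2.20) of Lemma 2.2 of the paper: for `q > 2` there is `C > 0`,
depending only on `q`, with
`||a+b|^q - |a|^q - q·|a|^(q-2)·a·b| ≤ C·(|a|^(q-2)·b² + |b|^q)` for all reals. -/
theorem stmt_2 (q : ℝ) (hq : 2 < q) :
    ∃ C : ℝ, 0 < C ∧
      ∀ a b : ℝ,
        |(|a + b| ^ q - |a| ^ q - q * |a| ^ (q - 2) * a * b)| ≤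
          C * (|a| ^ (q - 2) * b ^ 2 + |b| ^ q) := by
  have hq' : 0 < q * (q - 1) := mul_pos (by linarith) (by linarith)
  refine ⟨q * (q - 1) * 2 ^ (q - 2), mul_pos hq' (by positivity), fun a b ↦ ?_⟩
  have hb : |b| ^ (q - 2) * b ^ 2 = |b| ^ q := by
    rw [← sq_abs b, ← Real.rpow_natCast, ← Real.rpow_add' (abs_nonneg b) (by linarith)]
    norm_num
  calc _ ≤ q * (q - 1) * (|a| + |b|) ^ (q - 2) * b ^ 2 := abs_abs_add_rpow_sub_sub_le hq a b
    _ ≤ q * (q - 1) * (2 ^ (q - 2) * (|a| ^ (q - 2) + |b| ^ (q - 2))) * b ^ 2 := by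
      gcongr
      exact Real.add_rpow_le_two_rpow_mul_rpow_add_rpow (abs_nonneg a) (abs_nonneg b)
        (by linarith)
    _ = _ := by rw [← hb]; ring
end

section
/- Let N ≥ 7 be an integer and set p := (N+2)/(N-2), so 1 < p < 2. Define f : ℝ → ℝ by f(s) := |s|^{p-1}·s. Then there exists a constant c > 0, depending only on p, such that for all real numbers a, b one has both | f(a-b) - f(a) + f(b) | ≤ c·( |a|^{p-1}·|b| + |b|^p ) and | f(a-b) - f(a) + f(b) | ≤ c·( |b|^{p-1}·|a| + |a|^p ). -/
open Real NNReal

/-- splitting an rpow for nonnegative base -/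
private lemma rpow_split {p : ℝ} (hp : 1 ≤ p) {x : ℝ} (hx : 0 ≤ x) :
    x ^ p = x ^ (p - 1) * x := by
  rcases eq_or_lt_of_le hx with h | h
  · rw [← h, Real.zero_rpow (by linarith), mul_zero]
  · rw [← Real.rpow_add_one h.ne' (p - 1), sub_add_cancel]

/-- Bernoulli-type: for `0 ≤ y ≤ x` and `1 ≤ p`, `x^p - y^p ≤ p x^(p-1) (x - y)`. -/
private lemma rpow_sub_rpow_le {p : ℝ} (hp : 1 ≤ p) {x y : ℝ} (hy : 0 ≤ y) (hxy : y ≤ x) :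
    x ^ p - y ^ p ≤ p * x ^ (p - 1) * (x - y) := by
  rcases eq_or_lt_of_le (hy.trans hxy) with h | hx
  · have hy0 : y = 0 := le_antisymm (hxy.trans h.ge) hy
    simp [← h, hy0, Real.zero_rpow (by linarith : p ≠ 0)]
  · have hb := one_add_mul_self_le_rpow_one_add (s := y / x - 1) (by
      have : 0 ≤ y / x := div_nonneg hy hx.le
      linarith) hp
    rw [add_sub_cancel] at hb
    have hxp : 0 < x ^ p := Real.rpow_pos_of_pos hx _
    have hyx : (y / x) ^ p = y ^ p / x ^ p := Real.div_rpow hy hx.le p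
    rw [hyx] at hb
    have h2 : x ^ p * (1 + p * (y / x - 1)) ≤ y ^ p := by
      calc x ^ p * (1 + p * (y / x - 1)) ≤ x ^ p * (y ^ p / x ^ p) := by
            exact mul_le_mul_of_nonneg_left hb hxp.le
        _ = y ^ p := by field_simp
    have h3 : x ^ p * (y / x) = x ^ (p - 1) * y := by
      rw [rpow_split hp hx.le]; field_simp
    have h4 : x ^ p = x ^ (p - 1) * x := rpow_split hp hx.le
    nlinarith [h2, h3, h4]

/-- Monotonicity of `F s = |s|^(p-1) s`. -/
private lemma Fmono {p : ℝ} (hp : 1 ≤ p) {x y : ℝ} (hxy : x ≤ y) :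
    |x| ^ (p - 1) * x ≤ |y| ^ (p - 1) * y := by
  rcases le_total 0 x with hx | hx
  · have hy : 0 ≤ y := hx.trans hxy
    rw [abs_of_nonneg hx, abs_of_nonneg hy]
    have h1 : x ^ (p - 1) ≤ y ^ (p - 1) := Real.rpow_le_rpow hx hxy (by linarith)
    exact mul_le_mul h1 hxy hx (Real.rpow_nonneg hy _)
  · rcases le_total 0 y with hy | hy
    · have h1 : |x| ^ (p - 1) * x ≤ 0 :=
        mul_nonpos_of_nonneg_of_nonpos (Real.rpow_nonneg (abs_nonneg x) _) hx
      have h2 : 0 ≤ |y| ^ (p - 1) * y :=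
        mul_nonneg (Real.rpow_nonneg (abs_nonneg y) _) hy
      linarith
    · rw [abs_of_nonpos hx, abs_of_nonpos hy]
      have h1 : (-y) ^ (p - 1) ≤ (-x) ^ (p - 1) :=
        Real.rpow_le_rpow (by linarith) (by linarith) (by linarith)
      nlinarith [Real.rpow_nonneg (show (0:ℝ) ≤ -y by linarith) (p - 1),
        Real.rpow_nonneg (show (0:ℝ) ≤ -x by linarith) (p - 1)]

/-- one-sided Lipschitz-type bound for `F s = |s|^(p-1) s` when `y ≤ x`. -/
private lemma keyle {p : ℝ} (hp : 1 ≤ p) (hp2 : p ≤ 2) {x y : ℝ} (hxy : y ≤ x) :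
    |x| ^ (p - 1) * x - |y| ^ (p - 1) * y ≤ 2 * (|x| + |y|) ^ (p - 1) * (x - y) := by
  have hq : (0:ℝ) ≤ p - 1 := by linarith
  rcases le_total 0 y with hy | hy
  · -- 0 ≤ y ≤ x
    have hx : 0 ≤ x := hy.trans hxy
    rw [abs_of_nonneg hx, abs_of_nonneg hy]
    have h1 : x ^ (p - 1) * x - y ^ (p - 1) * y ≤ p * x ^ (p - 1) * (x - y) := by
      have := rpow_sub_rpow_le hp hy hxy
      rwa [rpow_split hp hx, rpow_split hp hy] at this
    have h2 : x ^ (p - 1) ≤ (x + y) ^ (p - 1) :=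
      Real.rpow_le_rpow hx (by linarith) hq
    have h3 : p * x ^ (p - 1) ≤ 2 * (x + y) ^ (p - 1) := by
      nlinarith [Real.rpow_nonneg hx (p - 1)]
    have h4 := mul_le_mul_of_nonneg_right h3 (sub_nonneg.mpr hxy)
    linarith
  · rcases le_total 0 x with hx | hx
    · -- y ≤ 0 ≤ x : mixed case
      rw [abs_of_nonneg hx, abs_of_nonpos hy]
      have hs : (0:ℝ) ≤ x + -y := by linarith
      have h1 : x ^ (p - 1) ≤ (x + -y) ^ (p - 1) := Real.rpow_le_rpow hx (by linarith) hq
      have h2 : (-y) ^ (p - 1) ≤ (x + -y) ^ (p - 1) :=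
        Real.rpow_le_rpow (by linarith) (by linarith) hq
      have h3 : x ^ (p - 1) * x ≤ (x + -y) ^ (p - 1) * (x - y) :=
        mul_le_mul h1 (by linarith) hx (Real.rpow_nonneg hs _)
      have h4 : (-y) ^ (p - 1) * (-y) ≤ (x + -y) ^ (p - 1) * (x - y) :=
        mul_le_mul h2 (by linarith) (by linarith) (Real.rpow_nonneg hs _)
      nlinarith
    · -- y ≤ x ≤ 0
      rw [abs_of_nonpos hx, abs_of_nonpos hy]
      have h1 : (-y) ^ (p - 1) * (-y) - (-x) ^ (p - 1) * (-x)
          ≤ p * (-y) ^ (p - 1) * (-y - -x) := by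
        have := rpow_sub_rpow_le hp (show (0:ℝ) ≤ -x by linarith) (by linarith : -x ≤ -y)
        rwa [rpow_split hp (by linarith : (0:ℝ) ≤ -y),
          rpow_split hp (by linarith : (0:ℝ) ≤ -x)] at this
      have h2 : (-y) ^ (p - 1) ≤ (-x + -y) ^ (p - 1) :=
        Real.rpow_le_rpow (by linarith) (by linarith) hq
      have h3 : p * (-y) ^ (p - 1) ≤ 2 * (-x + -y) ^ (p - 1) := by
        nlinarith [Real.rpow_nonneg (show (0:ℝ) ≤ -y by linarith) (p - 1)]
      have h4 := mul_le_mul_of_nonneg_right h3 (sub_nonneg.mpr hxy)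
      linarith

private lemma keyabs {p : ℝ} (hp : 1 ≤ p) (hp2 : p ≤ 2) (x y : ℝ) :
    abs (|x| ^ (p - 1) * x - |y| ^ (p - 1) * y) ≤ 2 * (|x| + |y|) ^ (p - 1) * |x - y| := by
  rcases le_total y x with h | h
  · rw [abs_of_nonneg (sub_nonneg.mpr (Fmono hp h)), abs_of_nonneg (sub_nonneg.mpr h)]
    exact keyle hp hp2 h
  · rw [abs_sub_comm, abs_sub_comm x y,
      abs_of_nonneg (sub_nonneg.mpr (Fmono hp h)), abs_of_nonneg (sub_nonneg.mpr h)]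
    calc |y| ^ (p - 1) * y - |x| ^ (p - 1) * x ≤ 2 * (|y| + |x|) ^ (p - 1) * (y - x) :=
          keyle hp hp2 h
      _ = 2 * (|x| + |y|) ^ (p - 1) * (y - x) := by rw [add_comm]

/-- real subadditivity of rpow for exponent in [0,1] -/
private lemma radd {q : ℝ} (hq : 0 ≤ q) (hq1 : q ≤ 1) {x y : ℝ} (hx : 0 ≤ x) (hy : 0 ≤ y) :
    (x + y) ^ q ≤ x ^ q + y ^ q := by
  have h := NNReal.rpow_add_le_add_rpow (x.toNNReal) (y.toNNReal) hq hq1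
  have hco : ((x.toNNReal + y.toNNReal : ℝ≥0) : ℝ) = x + y := by
    simp [Real.coe_toNNReal x hx, Real.coe_toNNReal y hy]
  calc (x + y) ^ q = (((x.toNNReal + y.toNNReal : ℝ≥0) : ℝ)) ^ q := by rw [hco]
    _ = (((x.toNNReal + y.toNNReal) ^ q : ℝ≥0) : ℝ) := by rw [NNReal.coe_rpow]
    _ ≤ (((x.toNNReal ^ q + y.toNNReal ^ q : ℝ≥0)) : ℝ) := by exact_mod_cast h
    _ = x ^ q + y ^ q := by
        push_cast [NNReal.coe_rpow, Real.coe_toNNReal x hx, Real.coe_toNNReal y hy]; ring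

private lemma main1 {p : ℝ} (hp : 1 ≤ p) (hp2 : p ≤ 2) (f : ℝ → ℝ)
    (hf : ∀ s, f s = |s| ^ (p - 1) * s) (a b : ℝ) :
    |f (a - b) - f a + f b| ≤ 4 * (|a| ^ (p - 1) * |b| + |b| ^ p) := by
  have hq : (0:ℝ) ≤ p - 1 := by linarith
  have h1 : |f (a - b) - f a| ≤ 2 * (|a - b| + |a|) ^ (p - 1) * |b| := by
    rw [hf, hf]
    have := keyabs hp hp2 (a - b) a
    rwa [show a - b - a = -b by ring, abs_neg] at this
  have h2 : (|a - b| + |a|) ^ (p - 1) ≤ 2 * |a| ^ (p - 1) + |b| ^ (p - 1) := by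
    calc (|a - b| + |a|) ^ (p - 1) ≤ (2 * |a| + |b|) ^ (p - 1) := by
          apply Real.rpow_le_rpow (by positivity) _ hq
          have := abs_sub a b
          nlinarith [abs_sub_abs_le_abs_sub a b, abs_sub a b, abs_nonneg a, abs_nonneg b,
            abs_sub_le a b 0, abs_abs (a - b)]
      _ ≤ (2 * |a|) ^ (p - 1) + |b| ^ (p - 1) :=
          radd hq (by linarith) (by positivity) (abs_nonneg b)
      _ ≤ 2 * |a| ^ (p - 1) + |b| ^ (p - 1) := by
          have : (2 * |a|) ^ (p - 1) = 2 ^ (p - 1) * |a| ^ (p - 1) :=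
            Real.mul_rpow (by norm_num) (abs_nonneg a)
          have h2p : (2:ℝ) ^ (p - 1) ≤ 2 := by
            calc (2:ℝ) ^ (p - 1) ≤ (2:ℝ) ^ (1:ℝ) :=
                  Real.rpow_le_rpow_of_exponent_le one_le_two (by linarith)
              _ = 2 := Real.rpow_one 2
          nlinarith [Real.rpow_nonneg (abs_nonneg a) (p - 1)]
  have h3 : |f b| = |b| ^ p := by
    rw [hf, abs_mul, abs_of_nonneg (Real.rpow_nonneg (abs_nonneg b) _), ← rpow_split hp (abs_nonneg b)]
  have h4 : |b| ^ (p - 1) * |b| = |b| ^ p := (rpow_split hp (abs_nonneg b)).symm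
  calc |f (a - b) - f a + f b| ≤ |f (a - b) - f a| + |f b| := abs_add_le _ _
    _ ≤ 2 * (2 * |a| ^ (p - 1) + |b| ^ (p - 1)) * |b| + |b| ^ p := by
        rw [h3]
        have hb : (0:ℝ) ≤ |b| := abs_nonneg b
        nlinarith [h1, h2, mul_le_mul_of_nonneg_right h2 hb,
          Real.rpow_nonneg (show (0:ℝ) ≤ |a - b| + |a| by positivity) (p - 1)]
    _ ≤ 4 * (|a| ^ (p - 1) * |b| + |b| ^ p) := by nlinarith [h4, Real.rpow_nonneg (abs_nonneg b) p]

/-- Lemma 2.4 of the paper: for `N ≥ 7` and `p = (N+2)/(N-2)`,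
with `f(s) = |s|^(p-1) s`, there is `c > 0`, depending only on `p`, with
`|f(a-b) - f(a) + f(b)| ≤ c (|a|^(p-1)|b| + |b|^p)` and
`|f(a-b) - f(a) + f(b)| ≤ c (|b|^(p-1)|a| + |a|^p)` for all reals `a, b`. -/
theorem stmt_4 (N : ℕ) (hN : 7 ≤ N) (p : ℝ) (hp : p = ((N : ℝ) + 2) / ((N : ℝ) - 2))
    (f : ℝ → ℝ) (hf : ∀ s, f s = |s| ^ (p - 1) * s) :
    ∃ c : ℝ, 0 < c ∧
      ∀ a b : ℝ,
        |f (a - b) - f a + f b| ≤ c * (|a| ^ (p - 1) * |b| + |b| ^ p) ∧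
        |f (a - b) - f a + f b| ≤ c * (|b| ^ (p - 1) * |a| + |a| ^ p) := by
  have hN7 : (7:ℝ) ≤ (N:ℝ) := by exact_mod_cast hN
  have hd : (0:ℝ) < (N:ℝ) - 2 := by linarith
  have hp1 : 1 ≤ p := by rw [hp, le_div_iff₀ hd]; linarith
  have hp2 : p ≤ 2 := by rw [hp, div_le_iff₀ hd]; linarith
  refine ⟨4, by norm_num, fun a b => ⟨main1 hp1 hp2 f hf a b, ?_⟩⟩
  have hodd : f (a - b) = -f (b - a) := by
    rw [hf, hf, show a - b = -(b - a) by ring, abs_neg]; ring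
  have hsym : |f (a - b) - f a + f b| = |f (b - a) - f b + f a| := by
    rw [hodd, show -f (b - a) - f a + f b = -(f (b - a) - f b + f a) by ring, abs_neg]
  rw [hsym]
  exact main1 hp1 hp2 f hf b a
end

section
/- Let N ≥ 7 be an integer and set p := (N+2)/(N-2), so 1 < p < 2. Define f : ℝ → ℝ by f(s) := |s|^{p-1}·s, whose derivative is f'(s) = p·|s|^{p-1}. Then there exists a constant C > 0, depending only on p, such that for all real numbers a, b₁, b₂ one has | f(a+b₁) - f(a+b₂) - p·|a|^{p-1}·(b₁-b₂) | ≤ C·( |b₁|^{p-1} + |b₂|^{p-1} )·|b₁ - b₂|. -/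
/-!
With `g(t) = f(a + t) - p |a|^(p-1) t`, the left-hand side is `|g(b₁) - g(b₂)|`, so by the mean
value theorem it suffices to bound `|g'(t)| = p | |a + t|^(p-1) - |a|^(p-1) |` for `t` between
`b₁` and `b₂`. Since `0 < p - 1 ≤ 1`, the map `s ↦ s^(p-1)` is `(p-1)`-Hölder on `[0, ∞)`
(a consequence of the subadditivity `(u + v)^r ≤ u^r + v^r`), which gives
`|g'(t)| ≤ p |t|^(p-1) ≤ p (|b₁|^(p-1) + |b₂|^(p-1))`; hence `C = p` works.
-/

open Set

namespace Real

theorem abs_rpow_sub_rpow_le_abs_sub_rpow_s5 {r u v : ℝ} (hu : 0 ≤ u) (hv : 0 ≤ v) (hr0 : 0 ≤ r)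
    (hr1 : r ≤ 1) : |u ^ r - v ^ r| ≤ |u - v| ^ r := by
  wlog hvu : v ≤ u generalizing u v
  · rw [abs_sub_comm, abs_sub_comm u]
    exact this hv hu (le_of_not_ge hvu)
  rw [abs_of_nonneg (sub_nonneg.2 hvu),
    abs_of_nonneg (sub_nonneg.2 (rpow_le_rpow hv hvu hr0))]
  have hsub := rpow_add_le_add_rpow (sub_nonneg.2 hvu) hv hr0 hr1
  rw [sub_add_cancel] at hsub
  linarith

theorem abs_abs_rpow_sub_abs_rpow_le {r : ℝ} (x y : ℝ) (hr0 : 0 ≤ r) (hr1 : r ≤ 1) :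
    |(|x| ^ r - |y| ^ r)| ≤ |x - y| ^ r :=
  (abs_rpow_sub_rpow_le_abs_sub_rpow_s5 (abs_nonneg x) (abs_nonneg y) hr0 hr1).trans
    (rpow_le_rpow (abs_nonneg _) (abs_abs_sub_abs_le_abs_sub x y) hr0)

theorem abs_rpow_le_add_of_mem_uIcc {r t b₁ b₂ : ℝ} (hr : 0 ≤ r) (ht : t ∈ uIcc b₁ b₂) :
    |t| ^ r ≤ |b₁| ^ r + |b₂| ^ r := by
  have hmax : |t| ≤ max |b₁| |b₂| := by
    rcases mem_uIcc.1 ht with ⟨h₁, h₂⟩ | ⟨h₁, h₂⟩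
    · exact abs_le_max_abs_abs h₁ h₂
    · exact (abs_le_max_abs_abs h₁ h₂).trans_eq (max_comm _ _)
  have h₁ := rpow_nonneg (abs_nonneg b₁) r
  have h₂ := rpow_nonneg (abs_nonneg b₂) r
  rcases le_max_iff.1 hmax with h | h
  · linarith [rpow_le_rpow (abs_nonneg t) h hr]
  · linarith [rpow_le_rpow (abs_nonneg t) h hr]

theorem hasDerivAt_abs_rpow_sub_one_mul_self {q : ℝ} (hq : 1 < q) (x : ℝ) :
    HasDerivAt (fun s : ℝ => |s| ^ (q - 1) * s) (q * |x| ^ (q - 1)) x := by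
  have hcont : Continuous fun s : ℝ => |s| ^ (q - 1) :=
    continuous_abs.rpow_const fun _ => Or.inr (sub_pos.2 hq).le
  -- away from `0` this is the product rule; at `0` the derivative extends continuously
  refine hasDerivAt_of_hasDerivAt_of_ne' (g := fun s => q * |s| ^ (q - 1)) (x := 0)
    (fun y hy => ?_) (hcont.mul continuous_id').continuousAt
    (continuous_const.mul hcont).continuousAt x
  have hy' : |y| ≠ 0 := abs_ne_zero.2 hy
  have hpow : |y| ^ (q - 1 - 1) * |y| = |y| ^ (q - 1) := by
    rw [← rpow_add_one hy']; ring_nf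
  refine (((hasDerivAt_abs hy).rpow_const (Or.inl hy')).mul (hasDerivAt_id' y)).congr_deriv ?_
  linear_combination (q - 1) * hpow + (q - 1) * |y| ^ (q - 1 - 1) * sign_mul_self y

theorem abs_abs_rpow_mul_self_sub_sub_le {q : ℝ} (hq1 : 1 < q) (hq2 : q ≤ 2) (a b₁ b₂ : ℝ) :
    |(|a + b₁| ^ (q - 1) * (a + b₁) - |a + b₂| ^ (q - 1) * (a + b₂) -
        q * |a| ^ (q - 1) * (b₁ - b₂))| ≤
      q * (|b₁| ^ (q - 1) + |b₂| ^ (q - 1)) * |b₁ - b₂| := by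
  have hr0 : 0 ≤ q - 1 := by linarith
  have hr1 : q - 1 ≤ 1 := by linarith
  set g : ℝ → ℝ := fun t => |a + t| ^ (q - 1) * (a + t) - q * |a| ^ (q - 1) * t
  have hg : ∀ t, HasDerivAt g (q * |a + t| ^ (q - 1) - q * |a| ^ (q - 1)) t := fun t =>
    ((hasDerivAt_abs_rpow_sub_one_mul_self hq1 (a + t)).comp_const_add a t).sub
      ((hasDerivAt_id' t).const_mul _ |>.congr_deriv (mul_one _))
  have hg' : ∀ t ∈ uIcc b₁ b₂,
      ‖q * |a + t| ^ (q - 1) - q * |a| ^ (q - 1)‖ ≤ q * (|b₁| ^ (q - 1) + |b₂| ^ (q - 1)) := by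
    intro t ht
    calc ‖q * |a + t| ^ (q - 1) - q * |a| ^ (q - 1)‖
        = q * |(|a + t| ^ (q - 1) - |a| ^ (q - 1))| := by
          rw [norm_eq_abs, ← mul_sub, abs_mul, abs_of_pos (by linarith)]
      _ ≤ q * |t| ^ (q - 1) := by
          gcongr
          simpa using abs_abs_rpow_sub_abs_rpow_le (a + t) a hr0 hr1
      _ ≤ q * (|b₁| ^ (q - 1) + |b₂| ^ (q - 1)) := by
          gcongr
          exact abs_rpow_le_add_of_mem_uIcc hr0 ht
  have hmvt := (convex_uIcc b₁ b₂).norm_image_sub_le_of_norm_hasDerivWithin_le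
    (fun t _ => (hg t).hasDerivWithinAt) hg' right_mem_uIcc left_mem_uIcc
  simp only [norm_eq_abs, g] at hmvt
  convert hmvt using 2
  ring

end Real

/-- Lemma 2.5 of the paper: for `N ≥ 7` and `p = (N+2)/(N-2)`,
with `f(s) = |s|^(p-1) s` and `f'(s) = p |s|^(p-1)`, there exists `C > 0`, depending
only on `p`, such that for all reals `a, b₁, b₂`,
`|f(a+b₁) - f(a+b₂) - f'(a)(b₁-b₂)| ≤ C (|b₁|^(p-1) + |b₂|^(p-1)) |b₁ - b₂|`. -/
theorem stmt_5 (N : ℕ) (hN : 7 ≤ N) (p : ℝ) (hp : p = ((N : ℝ) + 2) / ((N : ℝ) - 2))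
    (f : ℝ → ℝ) (hf : ∀ s, f s = |s| ^ (p - 1) * s) :
    ∃ C : ℝ, 0 < C ∧
      ∀ a b₁ b₂ : ℝ,
        |f (a + b₁) - f (a + b₂) - p * |a| ^ (p - 1) * (b₁ - b₂)| ≤
          C * (|b₁| ^ (p - 1) + |b₂| ^ (p - 1)) * |b₁ - b₂| := by
  have hN' : (7 : ℝ) ≤ N := by exact_mod_cast hN
  have hden : (0 : ℝ) < N - 2 := by linarith
  have hp1 : 1 < p := by rw [hp, lt_div_iff₀ hden]; linarith
  have hp2 : p ≤ 2 := by rw [hp, div_le_iff₀ hden]; linarith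
  refine ⟨p, by linarith, fun a b₁ b₂ => ?_⟩
  simp only [hf]
  exact Real.abs_abs_rpow_mul_self_sub_sub_le hp1 hp2 a b₁ b₂
end

section
/- Let N ≥ 7 be an integer, p := (N+2)/(N-2), α_N := (N(N-2))^{(N-2)/4}, and for δ > 0 let U_δ : ℝ^N → ℝ be U_δ(x) := α_N · δ^{(N-2)/2} / (δ² + |x|²)^{(N-2)/2}. Let Ω ⊆ ℝ^N be a bounded open set containing 0. Then, as δ → 0⁺, δ^{-4N/(N+2)} · ∫_Ω U_δ(x)^{2N/(N+2)} dx tends to α_N^{2N/(N+2)} · ∫_{ℝ^N} (1+|y|²)^{-N(N-2)/(N+2)} dy, the latter integral being finite since 2N(N-2)/(N+2) > N for N ≥ 7. -/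
open MeasureTheory Filter Pointwise

/-- The standard bubble `U_δ(x) = α_N δ^((N-2)/2) / (δ² + |x|²)^((N-2)/2)`,
with `α_N = (N(N-2))^((N-2)/4)`. -/
noncomputable def bubble (N : ℕ) (δ : ℝ) (x : EuclideanSpace ℝ (Fin N)) : ℝ :=
  ((N : ℝ) * ((N : ℝ) - 2)) ^ (((N : ℝ) - 2) / 4) * δ ^ (((N : ℝ) - 2) / 2) /
    (δ ^ 2 + ‖x‖ ^ 2) ^ (((N : ℝ) - 2) / 2)

/-- The asymptotic expansion (3.6) in Claim 2 of the proof of Proposition 3.7 of the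
paper: for `N ≥ 7` and `Ω ⊆ ℝ^N` a bounded open set containing `0`, as `δ → 0⁺`,
`δ^(-4N/(N+2)) ∫_Ω U_δ^(2N/(N+2)) → α_N^(2N/(N+2)) ∫_{ℝ^N} (1+|y|²)^(-N(N-2)/(N+2))`,
the latter integral being finite since `2N(N-2)/(N+2) > N` for `N ≥ 7`. -/
theorem stmt_12 (N : ℕ) (hN : 7 ≤ N) (Ω : Set (EuclideanSpace ℝ (Fin N)))
    (hopen : IsOpen Ω) (hbdd : Bornology.IsBounded Ω) (h0 : 0 ∈ Ω) :
    Integrable (fun y : EuclideanSpace ℝ (Fin N) =>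
        (1 + ‖y‖ ^ 2) ^ (-((N : ℝ) * ((N : ℝ) - 2) / ((N : ℝ) + 2)))) ∧
    Tendsto
      (fun δ : ℝ =>
        δ ^ (-(4 * (N : ℝ) / ((N : ℝ) + 2))) *
          ∫ x in Ω, (bubble N δ x) ^ (2 * (N : ℝ) / ((N : ℝ) + 2)))
      (nhdsWithin 0 (Set.Ioi 0))
      (nhds ((((N : ℝ) * ((N : ℝ) - 2)) ^ (((N : ℝ) - 2) / 4)) ^
          (2 * (N : ℝ) / ((N : ℝ) + 2)) *
        ∫ y : EuclideanSpace ℝ (Fin N),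
          (1 + ‖y‖ ^ 2) ^ (-((N : ℝ) * ((N : ℝ) - 2) / ((N : ℝ) + 2))))) := by
  have hn : (7:ℝ) ≤ (N:ℝ) := by exact_mod_cast hN
  set n : ℝ := (N:ℝ) with hn'
  have hn2 : (0:ℝ) < n + 2 := by linarith
  set a : ℝ := n * (n - 2) / (n + 2) with ha
  set q : ℝ := 2 * n / (n + 2) with hqdef
  set α : ℝ := (n * (n - 2)) ^ ((n - 2) / 4) with hα'
  have hα : (0:ℝ) ≤ α := Real.rpow_nonneg (by nlinarith) _
  set g : EuclideanSpace ℝ (Fin N) → ℝ := fun y => (1 + ‖y‖ ^ 2) ^ (-a) with hg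
  have hgc : Continuous g := by
    apply Continuous.rpow_const (by continuity)
    intro y; left; positivity
  have hgnn : ∀ y, 0 ≤ g y := fun y => Real.rpow_nonneg (by positivity) _
  have hint : Integrable g := by
    have h2a : (Module.finrank ℝ (EuclideanSpace ℝ (Fin N)) : ℝ) < 2 * a := by
      rw [finrank_euclideanSpace_fin]
      rw [show 2 * a = 2 * (n * (n - 2)) / (n + 2) by rw [ha]; ring, lt_div_iff₀ hn2]
      nlinarith
    have h := integrable_rpow_neg_one_add_norm_sq
      (E := EuclideanSpace ℝ (Fin N)) (μ := volume) h2a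
    have he : -(2 * a) / 2 = -a := by ring
    rwa [he] at h
  refine ⟨hint, ?_⟩
  have hms : ∀ c : ℝ, MeasurableSet (c • Ω) := by
    intro c
    rcases eq_or_ne c 0 with rfl | hc
    · rw [Set.zero_smul_set ⟨0, h0⟩]; exact measurableSet_singleton 0
    · exact (hopen.smul₀ hc).measurableSet
  -- key identity
  have key : ∀ δ : ℝ, δ ∈ Set.Ioi (0:ℝ) →
      α ^ q * ∫ y in δ⁻¹ • Ω, g y
        = δ ^ (-(4 * n / (n + 2))) * ∫ x in Ω, (bubble N δ x) ^ q := by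
    intro δ hδ
    rw [Set.mem_Ioi] at hδ
    have hbq : (n - 2) / 2 * q = a := by rw [hqdef, ha]; field_simp
    have hbub : ∀ x : EuclideanSpace ℝ (Fin N),
        (bubble N δ x) ^ q = (α ^ q * δ ^ a) * (δ ^ 2 + ‖x‖ ^ 2) ^ (-a) := by
      intro x
      have hD : (0:ℝ) < δ ^ 2 + ‖x‖ ^ 2 := by positivity
      unfold bubble
      rw [← hn', ← hα']
      rw [Real.div_rpow (by positivity) (Real.rpow_nonneg hD.le _),
        Real.mul_rpow hα (Real.rpow_nonneg hδ.le _),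
        ← Real.rpow_mul hδ.le, ← Real.rpow_mul hD.le, hbq,
        Real.rpow_neg hD.le, div_eq_mul_inv, mul_assoc]
    have hcomp : ∫ x in Ω, (δ ^ 2 + ‖x‖ ^ 2) ^ (-a)
        = δ ^ N * ((δ ^ 2) ^ (-a) * ∫ y in δ⁻¹ • Ω, g y) := by
      have hchg := MeasureTheory.Measure.setIntegral_comp_smul_of_pos
        (volume (α := EuclideanSpace ℝ (Fin N)))
        (fun x => (δ ^ 2 + ‖x‖ ^ 2) ^ (-a)) (δ⁻¹ • Ω) hδ
      rw [smul_inv_smul₀ hδ.ne'] at hchg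
      have hsm : ∀ y : EuclideanSpace ℝ (Fin N),
          (δ ^ 2 + ‖δ • y‖ ^ 2) ^ (-a) = (δ ^ 2) ^ (-a) * g y := by
        intro y
        have h1 : δ ^ 2 + ‖δ • y‖ ^ 2 = δ ^ 2 * (1 + ‖y‖ ^ 2) := by
          rw [norm_smul, Real.norm_eq_abs, mul_pow, sq_abs]; ring
        rw [h1, Real.mul_rpow (by positivity) (by positivity)]
      simp only [hsm] at hchg
      rw [MeasureTheory.integral_const_mul] at hchg
      rw [finrank_euclideanSpace_fin] at hchg
      rw [hchg, smul_eq_mul, ← mul_assoc, mul_inv_cancel₀ (by positivity), one_mul]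
    simp only [hbub]
    rw [MeasureTheory.integral_const_mul, hcomp]
    have hδpow : δ ^ (-(4 * n / (n + 2))) * δ ^ a * δ ^ (N:ℕ) * (δ ^ 2) ^ (-a) = 1 := by
      rw [← Real.rpow_natCast δ N, ← Real.rpow_natCast δ 2, ← Real.rpow_mul hδ.le,
        ← Real.rpow_add hδ, ← Real.rpow_add hδ, ← Real.rpow_add hδ]
      rw [show -(4 * n / (n + 2)) + a + (N:ℕ) + (2:ℕ) * (-a) = 0 by
        push_cast; rw [ha, ← hn']; field_simp; ring]
      exact Real.rpow_zero δ
    rw [show δ ^ (-(4 * n / (n + 2))) * (α ^ q * δ ^ a *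
          (δ ^ N * ((δ ^ 2) ^ (-a) * ∫ y in δ⁻¹ • Ω, g y)))
        = (δ ^ (-(4 * n / (n + 2))) * δ ^ a * δ ^ (N:ℕ) * (δ ^ 2) ^ (-a)) *
          (α ^ q * ∫ y in δ⁻¹ • Ω, g y) by ring, hδpow, one_mul]
  -- convergence
  have htend : Tendsto (fun δ : ℝ => ∫ y in δ⁻¹ • Ω, g y)
      (nhdsWithin 0 (Set.Ioi 0)) (nhds (∫ y, g y)) := by
    simp_rw [← MeasureTheory.integral_indicator (hms _)]
    apply MeasureTheory.tendsto_integral_filter_of_dominated_convergence g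
    · filter_upwards with δ
      exact (hgc.aestronglyMeasurable).indicator (hms _)
    · filter_upwards with δ
      filter_upwards with y
      rw [Real.norm_eq_abs]
      by_cases hy : y ∈ δ⁻¹ • Ω
      · rw [Set.indicator_of_mem hy, abs_of_nonneg (hgnn y)]
      · rw [Set.indicator_of_notMem hy, abs_zero]; exact hgnn y
    · exact hint
    · filter_upwards with y
      obtain ⟨ε, hε, hball⟩ := Metric.isOpen_iff.1 hopen 0 h0
      have hmem : Set.Ioo (0:ℝ) (ε / (‖y‖ + 1)) ∈ nhdsWithin (0:ℝ) (Set.Ioi 0) :=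
        Ioo_mem_nhdsGT_of_mem (by constructor <;> [rfl; positivity])
      apply Tendsto.congr' _ tendsto_const_nhds
      filter_upwards [hmem] with δ hδ
      have hδ0 : 0 < δ := hδ.1
      have : δ • y ∈ Ω := by
        apply hball
        rw [Metric.mem_ball, dist_zero_right, norm_smul, Real.norm_eq_abs,
          abs_of_pos hδ0]
        calc δ * ‖y‖ ≤ δ * (‖y‖ + 1) := by nlinarith [norm_nonneg y]
          _ < ε / (‖y‖ + 1) * (‖y‖ + 1) := by
              apply mul_lt_mul_of_pos_right hδ.2; positivity
          _ = ε := by field_simp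
      rw [Set.indicator_of_mem (by rwa [Set.mem_inv_smul_set_iff₀ hδ0.ne']) g]
  exact Tendsto.congr' (Filter.eventuallyEq_of_mem self_mem_nhdsWithin key)
    (htend.const_mul _)
end

section
/- Let N ≥ 7 be an integer, α_N := (N(N-2))^{(N-2)/4}, and for δ > 0 let U_δ : ℝ^N → ℝ be U_δ(x) := α_N · δ^{(N-2)/2} / (δ² + |x|²)^{(N-2)/2}. Let Ω ⊆ ℝ^N be a bounded open set containing 0. Then there exist constants C > 0 and δ₀ > 0 such that for all δ ∈ (0, δ₀) one has | ∫_Ω U_δ(x)^{2N/(N-2)} dx - α_N^{2N/(N-2)} · ∫_{ℝ^N} (1+|y|²)^{-N} dy | ≤ C · δ^N. -/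
open MeasureTheory

lemma aux_f_integrable (N : ℕ) (hN : 1 ≤ N) :
    Integrable (fun y : EuclideanSpace ℝ (Fin N) => (1 + ‖y‖ ^ 2) ^ (-(N : ℝ))) := by
  have h := integrable_rpow_neg_one_add_norm_sq (E := EuclideanSpace ℝ (Fin N))
      (μ := volume) (r := 2 * N) ?_
  · have he : -(2 * (N : ℝ)) / 2 = -(N : ℝ) := by ring
    rwa [he] at h
  · rw [finrank_euclideanSpace_fin]
    have : (1 : ℝ) ≤ N := by exact_mod_cast hN
    linarith

lemma aux_scale_eq (N : ℕ) {δ : ℝ} (hδ : 0 < δ) (x : EuclideanSpace ℝ (Fin N)) :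
    (1 + ‖δ⁻¹ • x‖ ^ 2) ^ (-(N : ℝ)) = δ ^ N * (δ ^ N / (δ ^ 2 + ‖x‖ ^ 2) ^ N) := by
  have hd : (0 : ℝ) < δ ^ 2 + ‖x‖ ^ 2 := by positivity
  have hdn : (δ ^ 2 + ‖x‖ ^ 2) ^ N ≠ 0 := by positivity
  have h1 : ‖δ⁻¹ • x‖ = δ⁻¹ * ‖x‖ := by
    rw [norm_smul, Real.norm_eq_abs, abs_of_pos (by positivity)]
  have h2 : (1 : ℝ) + ‖δ⁻¹ • x‖ ^ 2 = (δ ^ 2 + ‖x‖ ^ 2) / δ ^ 2 := by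
    rw [h1]; field_simp
  rw [h2, Real.rpow_neg (by positivity), Real.div_rpow hd.le (by positivity),
    Real.rpow_natCast, Real.rpow_natCast, inv_div]
  field_simp
  ring

lemma aux_g_integrable (N : ℕ) (hN : 1 ≤ N) {δ : ℝ} (hδ : 0 < δ) :
    Integrable (fun x : EuclideanSpace ℝ (Fin N) => δ ^ N / (δ ^ 2 + ‖x‖ ^ 2) ^ N) := by
  have hc : Integrable
      (fun x : EuclideanSpace ℝ (Fin N) => (1 + ‖δ⁻¹ • x‖ ^ 2) ^ (-(N : ℝ))) :=
    (aux_f_integrable N hN).comp_smul (inv_ne_zero hδ.ne')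
  refine (hc.const_mul ((δ ^ N)⁻¹)).congr (Filter.Eventually.of_forall fun x => ?_)
  dsimp only
  rw [aux_scale_eq N hδ x]
  have hδN : (δ : ℝ) ^ N ≠ 0 := by positivity
  field_simp

lemma aux_g_integral (N : ℕ) {δ : ℝ} (hδ : 0 < δ) :
    (∫ x : EuclideanSpace ℝ (Fin N), δ ^ N / (δ ^ 2 + ‖x‖ ^ 2) ^ N) =
      ∫ y : EuclideanSpace ℝ (Fin N), (1 + ‖y‖ ^ 2) ^ (-(N : ℝ)) := by
  have h := Measure.integral_comp_inv_smul (μ := (volume : Measure (EuclideanSpace ℝ (Fin N))))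
    (fun y : EuclideanSpace ℝ (Fin N) => (1 + ‖y‖ ^ 2) ^ (-(N : ℝ))) δ
  simp only [finrank_euclideanSpace_fin, smul_eq_mul] at h
  have h2 : (∫ x : EuclideanSpace ℝ (Fin N), (1 + ‖δ⁻¹ • x‖ ^ 2) ^ (-(N : ℝ))) =
      δ ^ N * ∫ x : EuclideanSpace ℝ (Fin N), δ ^ N / (δ ^ 2 + ‖x‖ ^ 2) ^ N := by
    rw [← integral_const_mul]
    exact integral_congr_ae (Filter.Eventually.of_forall fun x => aux_scale_eq N hδ x)
  rw [h2, abs_of_pos (pow_pos hδ N)] at h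
  exact mul_left_cancel₀ (pow_pos hδ N).ne' h

lemma aux_bubble_pow (N : ℕ) (hN : 7 ≤ N) {δ : ℝ} (hδ : 0 < δ)
    (x : EuclideanSpace ℝ (Fin N)) :
    bubble N δ x ^ (2 * (N : ℝ) / ((N : ℝ) - 2)) =
      (((N : ℝ) * ((N : ℝ) - 2)) ^ (((N : ℝ) - 2) / 4)) ^ (2 * (N : ℝ) / ((N : ℝ) - 2)) *
        (δ ^ N / (δ ^ 2 + ‖x‖ ^ 2) ^ N) := by
  have hN7 : (7 : ℝ) ≤ (N : ℝ) := by exact_mod_cast hN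
  have hN2 : (0 : ℝ) < (N : ℝ) - 2 := by linarith
  have hd : (0 : ℝ) < δ ^ 2 + ‖x‖ ^ 2 := by positivity
  have hα : (0 : ℝ) ≤ ((N : ℝ) * ((N : ℝ) - 2)) ^ (((N : ℝ) - 2) / 4) :=
    Real.rpow_nonneg (by positivity) _
  have hmq : ((N : ℝ) - 2) / 2 * (2 * (N : ℝ) / ((N : ℝ) - 2)) = (N : ℝ) := by
    field_simp
  unfold bubble
  rw [Real.div_rpow (by positivity) (Real.rpow_pos_of_pos hd _).le,
    Real.mul_rpow hα (Real.rpow_pos_of_pos hδ _).le,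
    ← Real.rpow_mul hδ.le, ← Real.rpow_mul hd.le, hmq,
    Real.rpow_natCast, Real.rpow_natCast, mul_div_assoc]

set_option maxHeartbeats 1000000 in
/-- The expansion (4.15) in the proof of Lemma 4.5 of the paper: for `N ≥ 7` and
`Ω ⊆ ℝ^N` a bounded open set containing `0`, there are `C > 0` and `δ₀ > 0` such that
for `0 < δ < δ₀`,
`|∫_Ω U_δ^(2N/(N-2)) - α_N^(2N/(N-2)) ∫_{ℝ^N} (1+|y|²)^(-N)| ≤ C δ^N`. -/
theorem stmt_13 (N : ℕ) (hN : 7 ≤ N) (Ω : Set (EuclideanSpace ℝ (Fin N)))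
    (hopen : IsOpen Ω) (hbdd : Bornology.IsBounded Ω) (h0 : 0 ∈ Ω) :
    ∃ C : ℝ, 0 < C ∧ ∃ δ₀ : ℝ, 0 < δ₀ ∧ ∀ δ : ℝ, 0 < δ → δ < δ₀ →
      |(∫ x in Ω, (bubble N δ x) ^ (2 * (N : ℝ) / ((N : ℝ) - 2))) -
          (((N : ℝ) * ((N : ℝ) - 2)) ^ (((N : ℝ) - 2) / 4)) ^
              (2 * (N : ℝ) / ((N : ℝ) - 2)) *
            ∫ y : EuclideanSpace ℝ (Fin N), (1 + ‖y‖ ^ 2) ^ (-(N : ℝ))| ≤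
        C * δ ^ (N : ℝ) := by
  obtain ⟨r, hr, hball⟩ := Metric.isOpen_iff.mp hopen 0 h0
  have hN1 : 1 ≤ N := by omega
  set A : ℝ :=
    (((N : ℝ) * ((N : ℝ) - 2)) ^ (((N : ℝ) - 2) / 4)) ^ (2 * (N : ℝ) / ((N : ℝ) - 2)) with hA
  have hN7 : (7 : ℝ) ≤ (N : ℝ) := by exact_mod_cast hN
  have hApos : 0 < A := Real.rpow_pos_of_pos (Real.rpow_pos_of_pos (by nlinarith) _) _
  have hfint : Integrable (fun y : EuclideanSpace ℝ (Fin N) => (1 + ‖y‖ ^ 2) ^ (-(N : ℝ))) :=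
    aux_f_integrable N hN1
  set c : ℝ := (1 / r ^ 2 + 1) ^ N with hc
  have hc1 : (0 : ℝ) < c := by positivity
  set If : ℝ := ∫ y : EuclideanSpace ℝ (Fin N), (1 + ‖y‖ ^ 2) ^ (-(N : ℝ)) with hIf
  have hIfnn : 0 ≤ If :=
    integral_nonneg fun y => Real.rpow_nonneg (by positivity) _
  refine ⟨A * c * If + 1, by positivity, 1, one_pos, fun δ hδ hδ1 => ?_⟩
  have hg := aux_g_integrable N hN1 hδ
  have hrw : (∫ x in Ω, (bubble N δ x) ^ (2 * (N : ℝ) / ((N : ℝ) - 2))) =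
      A * ∫ x in Ω, δ ^ N / (δ ^ 2 + ‖x‖ ^ 2) ^ N := by
    rw [← integral_const_mul]
    exact integral_congr_ae (Filter.Eventually.of_forall fun x => aux_bubble_pow N hN hδ x)
  have hsplit : (∫ x in Ω, δ ^ N / (δ ^ 2 + ‖x‖ ^ 2) ^ N) +
      (∫ x in Ωᶜ, δ ^ N / (δ ^ 2 + ‖x‖ ^ 2) ^ N) =
      ∫ x : EuclideanSpace ℝ (Fin N), δ ^ N / (δ ^ 2 + ‖x‖ ^ 2) ^ N :=
    integral_add_compl hopen.measurableSet hg
  have hEq : (∫ x in Ω, (bubble N δ x) ^ (2 * (N : ℝ) / ((N : ℝ) - 2))) - A * If =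
      -(A * ∫ x in Ωᶜ, δ ^ N / (δ ^ 2 + ‖x‖ ^ 2) ^ N) := by
    rw [hrw, hIf, ← aux_g_integral N hδ, ← hsplit]
    ring
  have htnn : 0 ≤ ∫ x in Ωᶜ, δ ^ N / (δ ^ 2 + ‖x‖ ^ 2) ^ N :=
    setIntegral_nonneg hopen.measurableSet.compl fun x _ => by positivity
  rw [hEq, abs_neg, abs_of_nonneg (mul_nonneg hApos.le htnn)]
  -- pointwise bound on Ωᶜ
  have hpt : ∀ x ∈ Ωᶜ, δ ^ N / (δ ^ 2 + ‖x‖ ^ 2) ^ N ≤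
      δ ^ N * c * (1 + ‖x‖ ^ 2) ^ (-(N : ℝ)) := by
    intro x hx
    have hrx : r ≤ ‖x‖ := by
      by_contra h
      push_neg at h
      exact hx (hball (by simpa [Metric.mem_ball, dist_zero_right] using h))
    have hd : (0 : ℝ) < δ ^ 2 + ‖x‖ ^ 2 := by positivity
    have hP : (0 : ℝ) < 1 + ‖x‖ ^ 2 := by positivity
    have key : (1 + ‖x‖ ^ 2) ≤ (1 / r ^ 2 + 1) * (δ ^ 2 + ‖x‖ ^ 2) := by
      have h1 : r ^ 2 ≤ ‖x‖ ^ 2 := by nlinarith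
      have h3 : (0 : ℝ) < r ^ 2 := by positivity
      have h4 : (1 : ℝ) ≤ ‖x‖ ^ 2 / r ^ 2 := (one_le_div h3).mpr h1
      have h5 : ‖x‖ ^ 2 / r ^ 2 ≤ (δ ^ 2 + ‖x‖ ^ 2) / r ^ 2 := by
        gcongr
        nlinarith [sq_nonneg δ]
      have h6 : (1 / r ^ 2 + 1) * (δ ^ 2 + ‖x‖ ^ 2) =
          (δ ^ 2 + ‖x‖ ^ 2) / r ^ 2 + (δ ^ 2 + ‖x‖ ^ 2) := by ring
      rw [h6]
      nlinarith [sq_nonneg δ]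
    have keyN : (1 + ‖x‖ ^ 2) ^ N ≤ c * (δ ^ 2 + ‖x‖ ^ 2) ^ N := by
      rw [hc, ← mul_pow]
      exact pow_le_pow_left₀ hP.le key N
    rw [Real.rpow_neg hP.le, Real.rpow_natCast, ← div_eq_mul_inv,
      div_le_div_iff₀ (by positivity) (by positivity)]
    nlinarith [pow_nonneg hδ.le N, pow_pos hd N, pow_pos hP N]
  have hmono : (∫ x in Ωᶜ, δ ^ N / (δ ^ 2 + ‖x‖ ^ 2) ^ N) ≤
      ∫ x in Ωᶜ, δ ^ N * c * (1 + ‖x‖ ^ 2) ^ (-(N : ℝ)) :=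
    setIntegral_mono_on hg.integrableOn
      ((hfint.const_mul (δ ^ N * c)).integrableOn) hopen.measurableSet.compl hpt
  have h2 : (∫ x in Ωᶜ, δ ^ N * c * (1 + ‖x‖ ^ 2) ^ (-(N : ℝ))) =
      δ ^ N * c * ∫ x in Ωᶜ, (1 + ‖x‖ ^ 2) ^ (-(N : ℝ)) := integral_const_mul _ _
  have h3 : (∫ x in Ωᶜ, (1 + ‖x‖ ^ 2) ^ (-(N : ℝ))) ≤ If :=
    setIntegral_le_integral hfint (ae_of_all _ fun x => by positivity)
  rw [Real.rpow_natCast]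
  have step : (∫ x in Ωᶜ, δ ^ N / (δ ^ 2 + ‖x‖ ^ 2) ^ N) ≤ δ ^ N * c * If := by
    refine le_trans hmono ?_
    rw [h2]
    exact mul_le_mul_of_nonneg_left h3 (by positivity)
  have := mul_le_mul_of_nonneg_left step hApos.le
  nlinarith [pow_nonneg hδ.le N]
end

section
/- Let N ≥ 7 be an integer, α_N := (N(N-2))^{(N-2)/4}, and for δ > 0 let U_δ : ℝ^N → ℝ be U_δ(x) := α_N · δ^{(N-2)/2} / (δ² + |x|²)^{(N-2)/2}. Let Ω ⊆ ℝ^N be a bounded open set containing 0. Then there exist constants C > 0 and δ₀ > 0 such that for all δ ∈ (0, δ₀) one has | ∫_Ω U_δ(x)² dx - α_N² · δ² · ∫_{ℝ^N} (1+|y|²)^{-(N-2)} dy | ≤ C · δ^{N-2}, where the integral ∫_{ℝ^N} (1+|y|²)^{-(N-2)} dy is finite since N > 4. -/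
/-! The substitution `x = δ y` gives `∫_Ω U_δ² = α_N² δ² ∫_{Ω/δ} (1 + |y|²)^(-(N-2))`, so the error
is `α_N² δ²` times the integral of `(1 + |y|²)^(-(N-2))` over the complement of `Ω/δ`. If
`B(0, r) ⊆ Ω`, that complement lies outside the ball of radius `R = r/δ`. Rescaling this ball to
the unit ball, where `1 + R²|z|² ≥ R²(1 + |z|²)/2`, bounds the tail by `2^(N-2) R^(4-N)` times the
full integral. Hence the error is `O(δ² (r/δ)^(4-N)) = O(δ^(N-2))`. -/

open MeasureTheory

open Module Metric
open scoped Pointwise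

section JapaneseBracket

variable {E : Type*} [NormedAddCommGroup E] [NormedSpace ℝ E]

lemma one_add_norm_smul_sq_rpow_neg_le {s R : ℝ} (hs : 0 ≤ s) (hR : 0 < R) {z : E}
    (hz : 1 ≤ ‖z‖) :
    (1 + ‖R • z‖ ^ 2) ^ (-s) ≤ 2 ^ s * R ^ (-2 * s) * (1 + ‖z‖ ^ 2) ^ (-s) := by
  have hle : R ^ 2 / 2 * (1 + ‖z‖ ^ 2) ≤ 1 + ‖R • z‖ ^ 2 := by
    rw [norm_smul, Real.norm_of_nonneg hR.le]
    nlinarith [mul_le_mul_of_nonneg_left (one_le_pow₀ (n := 2) hz) (sq_nonneg R)]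
  calc (1 + ‖R • z‖ ^ 2) ^ (-s)
      ≤ (R ^ 2 / 2 * (1 + ‖z‖ ^ 2)) ^ (-s) :=
        Real.rpow_le_rpow_of_nonpos (by positivity) hle (neg_nonpos.2 hs)
    _ = 2 ^ s * R ^ (-2 * s) * (1 + ‖z‖ ^ 2) ^ (-s) := by
        rw [Real.mul_rpow (by positivity) (by positivity),
          Real.div_rpow (by positivity) zero_le_two,
          ← Real.rpow_natCast, ← Real.rpow_mul hR.le, Real.rpow_neg zero_le_two,
          div_inv_eq_mul]
        push_cast
        ring_nf

variable [FiniteDimensional ℝ E] [MeasurableSpace E] [BorelSpace E] (μ : Measure E)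
  [μ.IsAddHaarMeasure]

lemma integrable_one_add_norm_sq_rpow_neg {s : ℝ} (hs : (finrank ℝ E : ℝ) < 2 * s) :
    Integrable (fun y : E => (1 + ‖y‖ ^ 2) ^ (-s)) μ := by
  simpa [neg_div] using integrable_rpow_neg_one_add_norm_sq (μ := μ) hs

lemma setIntegral_compl_ball_one_add_norm_sq_rpow_neg_le {s R : ℝ}
    (hs : (finrank ℝ E : ℝ) < 2 * s) (hR : 0 < R) :
    ∫ y in (ball 0 R)ᶜ, (1 + ‖y‖ ^ 2) ^ (-s) ∂μ ≤
      2 ^ s * R ^ ((finrank ℝ E : ℝ) - 2 * s) * ∫ y, (1 + ‖y‖ ^ 2) ^ (-s) ∂μ := by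
  set f : E → ℝ := fun y => (1 + ‖y‖ ^ 2) ^ (-s)
  have hf : Integrable f μ := integrable_one_add_norm_sq_rpow_neg μ hs
  have hf_nonneg : 0 ≤ f := fun y => by positivity
  have hs0 : 0 ≤ s := by linarith [(finrank ℝ E).cast_nonneg (α := ℝ)]
  have hball : R • (ball (0 : E) 1)ᶜ = (ball 0 R)ᶜ := by
    ext x
    simp only [Set.mem_smul_set_iff_inv_smul_mem₀ hR.ne', Set.mem_compl_iff, mem_ball_zero_iff,
      norm_smul, Real.norm_of_nonneg (inv_pos.2 hR).le, not_lt, le_inv_mul_iff₀ hR, mul_one]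
  calc ∫ y in (ball 0 R)ᶜ, f y ∂μ
      = R ^ finrank ℝ E * ∫ z in (ball 0 1)ᶜ, f (R • z) ∂μ := by
        rw [Measure.setIntegral_comp_smul_of_pos μ f _ hR, hball, smul_eq_mul,
          mul_inv_cancel_left₀ (pow_ne_zero _ hR.ne')]
    _ ≤ R ^ finrank ℝ E * ∫ z in (ball 0 1)ᶜ, 2 ^ s * R ^ (-2 * s) * f z ∂μ := by
        gcongr 1
        refine setIntegral_mono_on (hf.comp_smul hR.ne').integrableOn
          (hf.const_mul _).integrableOn isOpen_ball.measurableSet.compl fun z hz => ?_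
        exact one_add_norm_smul_sq_rpow_neg_le hs0 hR (by simpa using hz)
    _ ≤ R ^ finrank ℝ E * (2 ^ s * R ^ (-2 * s) * ∫ z, f z ∂μ) := by
        rw [integral_const_mul]
        gcongr 2
        exact setIntegral_le_integral hf (.of_forall hf_nonneg)
    _ = 2 ^ s * R ^ ((finrank ℝ E : ℝ) - 2 * s) * ∫ y, f y ∂μ := by
        rw [sub_eq_add_neg, Real.rpow_add hR, Real.rpow_natCast, neg_mul]
        ring

end JapaneseBracket

section Bubble

variable {N : ℕ} {δ : ℝ}

lemma bubble_smul (hδ : 0 < δ) (y : EuclideanSpace ℝ (Fin N)) :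
    bubble N δ (δ • y) = ((N : ℝ) * ((N : ℝ) - 2)) ^ (((N : ℝ) - 2) / 4) *
      (δ ^ (-(((N : ℝ) - 2) / 2)) * (1 + ‖y‖ ^ 2) ^ (-(((N : ℝ) - 2) / 2))) := by
  have hy : 0 < 1 + ‖y‖ ^ 2 := by positivity
  have hnorm : δ ^ 2 + ‖δ • y‖ ^ 2 = δ ^ 2 * (1 + ‖y‖ ^ 2) := by
    rw [norm_smul, Real.norm_of_nonneg hδ.le]
    ring
  rw [bubble, hnorm, Real.mul_rpow (by positivity) hy.le, ← Real.rpow_natCast δ 2,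
    ← Real.rpow_mul hδ.le, Nat.cast_two, two_mul, Real.rpow_add hδ, Real.rpow_neg hδ.le,
    Real.rpow_neg hy.le]
  field_simp

lemma bubble_sq_smul (hδ : 0 < δ) (y : EuclideanSpace ℝ (Fin N)) :
    bubble N δ (δ • y) ^ 2 =
      (((N : ℝ) * ((N : ℝ) - 2)) ^ (((N : ℝ) - 2) / 4)) ^ 2 * δ ^ (-((N : ℝ) - 2)) *
        (1 + ‖y‖ ^ 2) ^ (-((N : ℝ) - 2)) := by
  have hsq {a : ℝ} (ha : 0 ≤ a) : (a ^ (-(((N : ℝ) - 2) / 2))) ^ 2 = a ^ (-((N : ℝ) - 2)) := by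
    rw [← Real.rpow_mul_natCast ha]
    ring_nf
  rw [bubble_smul hδ, mul_pow, mul_pow, hsq hδ.le, hsq (by positivity), mul_assoc]

lemma setIntegral_bubble_sq (hδ : 0 < δ) (Ω : Set (EuclideanSpace ℝ (Fin N))) :
    ∫ x in Ω, bubble N δ x ^ 2 =
      (((N : ℝ) * ((N : ℝ) - 2)) ^ (((N : ℝ) - 2) / 4)) ^ 2 * δ ^ 2 *
        ∫ y in δ⁻¹ • Ω, (1 + ‖y‖ ^ 2) ^ (-((N : ℝ) - 2)) := by
  have hscale := Measure.setIntegral_comp_smul_of_pos volume (fun x => bubble N δ x ^ 2)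
    (δ⁻¹ • Ω) hδ
  rw [smul_inv_smul₀ hδ.ne', finrank_euclideanSpace_fin, smul_eq_mul,
    eq_inv_mul_iff_mul_eq₀ (pow_ne_zero _ hδ.ne')] at hscale
  simp only [bubble_sq_smul hδ, integral_const_mul] at hscale
  have hpow : δ ^ N * δ ^ (-((N : ℝ) - 2)) = δ ^ 2 := by
    rw [← Real.rpow_natCast, ← Real.rpow_add hδ, ← Real.rpow_natCast]
    norm_num
  rw [← hscale, ← hpow]
  ring

lemma finrank_euclideanSpace_lt_two_mul_sub_two (hN : 4 < N) :
    (finrank ℝ (EuclideanSpace ℝ (Fin N)) : ℝ) < 2 * ((N : ℝ) - 2) := by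
  rw [finrank_euclideanSpace_fin]
  have : (4 : ℝ) < N := by exact_mod_cast hN
  linarith

lemma abs_setIntegral_bubble_sq_sub_le (hN : 4 < N) {Ω : Set (EuclideanSpace ℝ (Fin N))}
    (hΩ : MeasurableSet Ω) {r : ℝ} (hr : 0 < r) (hball : ball 0 r ⊆ Ω) (hδ : 0 < δ) :
    |(∫ x in Ω, bubble N δ x ^ 2) -
        (((N : ℝ) * ((N : ℝ) - 2)) ^ (((N : ℝ) - 2) / 4)) ^ 2 * δ ^ 2 *
          ∫ y : EuclideanSpace ℝ (Fin N), (1 + ‖y‖ ^ 2) ^ (-((N : ℝ) - 2))| ≤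
      (((N : ℝ) * ((N : ℝ) - 2)) ^ (((N : ℝ) - 2) / 4)) ^ 2 * 2 ^ ((N : ℝ) - 2) *
        r ^ (4 - (N : ℝ)) * (∫ y : EuclideanSpace ℝ (Fin N), (1 + ‖y‖ ^ 2) ^ (-((N : ℝ) - 2))) *
          δ ^ ((N : ℝ) - 2) := by
  set f : EuclideanSpace ℝ (Fin N) → ℝ := fun y => (1 + ‖y‖ ^ 2) ^ (-((N : ℝ) - 2))
  set α : ℝ := ((N : ℝ) * ((N : ℝ) - 2)) ^ (((N : ℝ) - 2) / 4)
  have hs := finrank_euclideanSpace_lt_two_mul_sub_two hN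
  have hf : Integrable f := integrable_one_add_norm_sq_rpow_neg volume hs
  have hf_nonneg : 0 ≤ f := fun y => by positivity
  have hsplit := integral_add_compl (hΩ.const_smul₀ δ⁻¹) hf
  have hcompl : (δ⁻¹ • Ω)ᶜ ⊆ (ball 0 (r / δ))ᶜ := by
    refine Set.compl_subset_compl.2 ?_
    have := Set.smul_set_mono (a := δ⁻¹) hball
    rwa [_root_.smul_ball (inv_ne_zero hδ.ne'), smul_zero, Real.norm_of_nonneg (inv_pos.2 hδ).le,
      inv_mul_eq_div] at this
  have htail : ∫ y in (δ⁻¹ • Ω)ᶜ, f y ≤ 2 ^ ((N : ℝ) - 2) * (r / δ) ^ (4 - (N : ℝ)) * ∫ y, f y := by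
    have h := setIntegral_compl_ball_one_add_norm_sq_rpow_neg_le volume hs (div_pos hr hδ)
    rw [finrank_euclideanSpace_fin, show (N : ℝ) - 2 * ((N : ℝ) - 2) = 4 - N by ring] at h
    exact (setIntegral_mono_set hf.integrableOn (.of_forall hf_nonneg)
      hcompl.eventuallyLE).trans h
  have hpow : δ ^ ((N : ℝ) - 2) * δ ^ (4 - (N : ℝ)) = δ ^ 2 := by
    rw [← Real.rpow_add hδ, ← Real.rpow_natCast]
    norm_num
  have hdiff : (∫ x in Ω, bubble N δ x ^ 2) - α ^ 2 * δ ^ 2 * ∫ y, f y =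
      -(α ^ 2 * δ ^ 2 * ∫ y in (δ⁻¹ • Ω)ᶜ, f y) := by
    rw [setIntegral_bubble_sq hδ, ← hsplit]
    ring
  rw [hdiff, abs_neg, abs_of_nonneg (mul_nonneg (by positivity) (integral_nonneg hf_nonneg))]
  calc α ^ 2 * δ ^ 2 * ∫ y in (δ⁻¹ • Ω)ᶜ, f y
      ≤ α ^ 2 * δ ^ 2 * (2 ^ ((N : ℝ) - 2) * (r / δ) ^ (4 - (N : ℝ)) * ∫ y, f y) := by
        gcongr
    _ = α ^ 2 * 2 ^ ((N : ℝ) - 2) * r ^ (4 - (N : ℝ)) * (∫ y, f y) * δ ^ ((N : ℝ) - 2) := by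
        rw [Real.div_rpow hr.le hδ.le, ← hpow]
        field_simp

end Bubble

theorem stmt_14_general (N : ℕ) (hN : 7 ≤ N) (Ω : Set (EuclideanSpace ℝ (Fin N)))
    (hopen : IsOpen Ω) (h0 : 0 ∈ Ω) :
    Integrable (fun y : EuclideanSpace ℝ (Fin N) =>
        (1 + ‖y‖ ^ 2) ^ (-((N : ℝ) - 2))) ∧
    ∃ C : ℝ, 0 < C ∧ ∃ δ₀ : ℝ, 0 < δ₀ ∧ ∀ δ : ℝ, 0 < δ → δ < δ₀ →
      |(∫ x in Ω, (bubble N δ x) ^ 2) -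
          (((N : ℝ) * ((N : ℝ) - 2)) ^ (((N : ℝ) - 2) / 4)) ^ 2 * δ ^ 2 *
            ∫ y : EuclideanSpace ℝ (Fin N), (1 + ‖y‖ ^ 2) ^ (-((N : ℝ) - 2))| ≤
        C * δ ^ ((N : ℝ) - 2) := by
  have hN4 : 4 < N := by omega
  refine ⟨integrable_one_add_norm_sq_rpow_neg volume
    (finrank_euclideanSpace_lt_two_mul_sub_two hN4), ?_⟩
  obtain ⟨r, hr, hball⟩ := Metric.isOpen_iff.mp hopen 0 h0
  set K := (((N : ℝ) * ((N : ℝ) - 2)) ^ (((N : ℝ) - 2) / 4)) ^ 2 * 2 ^ ((N : ℝ) - 2) *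
    r ^ (4 - (N : ℝ)) * ∫ y : EuclideanSpace ℝ (Fin N), (1 + ‖y‖ ^ 2) ^ (-((N : ℝ) - 2))
  refine ⟨K + 1, by positivity, 1, one_pos, fun δ hδ _ => ?_⟩
  calc _ ≤ K * δ ^ ((N : ℝ) - 2) :=
        abs_setIntegral_bubble_sq_sub_le hN4 hopen.measurableSet hr hball hδ
    _ ≤ (K + 1) * δ ^ ((N : ℝ) - 2) := by gcongr; linarith

/-- The expansion (4.19) in the proof of Lemma 4.6 of the paper: for `N ≥ 7` and
`Ω ⊆ ℝ^N` a bounded open set containing `0`, there are `C > 0` and `δ₀ > 0` such that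
for `0 < δ < δ₀`,
`|∫_Ω U_δ² - α_N² δ² ∫_{ℝ^N} (1+|y|²)^(-(N-2))| ≤ C δ^(N-2)`, the integral
`∫_{ℝ^N} (1+|y|²)^(-(N-2))` being finite since `N > 4`. -/
theorem stmt_14 (N : ℕ) (hN : 7 ≤ N) (Ω : Set (EuclideanSpace ℝ (Fin N)))
    (hopen : IsOpen Ω) (hbdd : Bornology.IsBounded Ω) (h0 : 0 ∈ Ω) :
    Integrable (fun y : EuclideanSpace ℝ (Fin N) =>
        (1 + ‖y‖ ^ 2) ^ (-((N : ℝ) - 2))) ∧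
    ∃ C : ℝ, 0 < C ∧ ∃ δ₀ : ℝ, 0 < δ₀ ∧ ∀ δ : ℝ, 0 < δ → δ < δ₀ →
      |(∫ x in Ω, (bubble N δ x) ^ 2) -
          (((N : ℝ) * ((N : ℝ) - 2)) ^ (((N : ℝ) - 2) / 4)) ^ 2 * δ ^ 2 *
            ∫ y : EuclideanSpace ℝ (Fin N), (1 + ‖y‖ ^ 2) ^ (-((N : ℝ) - 2))| ≤
        C * δ ^ ((N : ℝ) - 2) :=
  stmt_14_general N hN Ω hopen h0
end

section
/- Let N ≥ 7 be an integer, α_N := (N(N-2))^{(N-2)/4}, and for δ > 0 let U_δ : ℝ^N → ℝ be U_δ(x) := α_N · δ^{(N-2)/2} / (δ² + |x|²)^{(N-2)/2}. Then there exists a constant C > 0, depending only on N, such that for all real numbers δ₁, δ₂ with 0 < δ₂ ≤ δ₁ one has ∫_{ℝ^N} U_{δ₁}(x) · U_{δ₂}(x) dx ≤ C · (δ₂/δ₁)^{(N-2)/2} · δ₁². -/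
open MeasureTheory

namespace Stmt15Aux

open Real Set Metric

/-- 1-D integrability of `(1+t²)^(-q) (t²)^(-q)`. -/
lemma phi_integrable {q : ℝ} (hq0 : 0 < q) (hq1 : 2 * q < 1) (hq2 : 1 < 4 * q) :
    Integrable (fun t : ℝ => (1 + t ^ 2) ^ (-q) * (t ^ 2) ^ (-q)) := by
  set ψ : ℝ → ℝ := fun t => (1 + t ^ 2) ^ (-q) * (t ^ 2) ^ (-q) with hψ
  have hmeas : Measurable ψ := by
    rw [hψ]; fun_prop
  have hpsi_nonneg : ∀ t, 0 ≤ ψ t := fun t =>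
    mul_nonneg (rpow_nonneg (by positivity) _) (rpow_nonneg (by positivity) _)
  have h1 : IntegrableOn ψ (Ioc (0:ℝ) 1) := by
    have base : IntegrableOn (fun t : ℝ => t ^ (-(2 * q))) (Ioc (0:ℝ) 1) :=
      (intervalIntegral.intervalIntegrable_rpow' (a := 0) (b := 1) (by linarith)).1
    refine base.mono' hmeas.aestronglyMeasurable ?_
    filter_upwards [ae_restrict_mem measurableSet_Ioc] with t ht
    have ht0 : 0 < t := ht.1
    have heq : (t ^ 2 : ℝ) ^ (-q) = t ^ (-(2 * q)) := by
      rw [← Real.rpow_natCast t 2, ← Real.rpow_mul ht0.le]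
      norm_num
    rw [Real.norm_eq_abs, abs_of_nonneg (hpsi_nonneg t)]
    calc ψ t ≤ 1 * (t ^ 2 : ℝ) ^ (-q) := by
          refine mul_le_mul_of_nonneg_right ?_ (rpow_nonneg (by positivity) _)
          exact rpow_le_one_of_one_le_of_nonpos (by nlinarith) (by linarith)
      _ = t ^ (-(2 * q)) := by rw [one_mul, heq]
  have h2 : IntegrableOn ψ (Ioi (1:ℝ)) := by
    have base : IntegrableOn (fun t : ℝ => t ^ (-(4 * q))) (Ioi (1:ℝ)) :=
      integrableOn_Ioi_rpow_of_lt (by linarith) one_pos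
    refine base.mono' hmeas.aestronglyMeasurable ?_
    filter_upwards [ae_restrict_mem measurableSet_Ioi] with t ht
    have ht0 : 0 < t := lt_trans one_pos ht
    have ht2 : (0:ℝ) < t ^ 2 := by positivity
    rw [Real.norm_eq_abs, abs_of_nonneg (hpsi_nonneg t)]
    calc ψ t ≤ (t ^ 2 : ℝ) ^ (-q) * (t ^ 2) ^ (-q) := by
          refine mul_le_mul_of_nonneg_right ?_ (rpow_nonneg (by positivity) _)
          exact Real.rpow_le_rpow_of_nonpos ht2 (by nlinarith) (by linarith)
      _ = t ^ (-(4 * q)) := by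
          rw [← Real.rpow_add ht2, ← Real.rpow_natCast t 2, ← Real.rpow_mul ht0.le]
          norm_num
          ring_nf
  have hIoi : IntegrableOn ψ (Ioi (0:ℝ)) := by
    rw [← Ioc_union_Ioi_eq_Ioi (zero_le_one (α := ℝ))]
    exact h1.union h2
  have hIci : IntegrableOn ψ (Ici (0:ℝ)) := by
    rwa [IntegrableOn, Measure.restrict_congr_set Ioi_ae_eq_Ici] at hIoi
  have hIic : IntegrableOn ψ (Iic (0:ℝ)) := by
    have hpre : (Neg.neg : ℝ → ℝ) ⁻¹' (Iic (0:ℝ)) = Ici 0 := by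
      ext t; simp
    have hcomp : ψ ∘ (Neg.neg : ℝ → ℝ) = ψ := by
      funext t; simp [hψ, neg_pow]
    have := (MeasurePreserving.integrableOn_comp_preimage
      (Measure.measurePreserving_neg (volume : Measure ℝ))
      (Homeomorph.neg ℝ).measurableEmbedding (f := ψ) (s := Iic (0:ℝ)))
    rw [← this]
    show IntegrableOn (ψ ∘ Neg.neg) _ _
    rw [hcomp, hpre]
    exact hIci
  rw [← integrableOn_univ, ← Iic_union_Ioi (a := (0:ℝ))]
  exact hIic.union hIoi

variable {N : ℕ}

/-- Coordinate hyperplanes in Euclidean space are null. -/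
lemma coord_hyperplane_null (hN : 0 < N) (i : Fin N) :
    (volume : Measure (EuclideanSpace ℝ (Fin N))) {y | y i = 0} = 0 := by
  set s : Submodule ℝ (EuclideanSpace ℝ (Fin N)) :=
    { carrier := {y | y i = 0}
      add_mem' := fun {a b} ha hb => by
        simp only [Set.mem_setOf_eq] at *
        simp [PiLp.add_apply, ha, hb]
      zero_mem' := by simp [Set.mem_setOf_eq]
      smul_mem' := fun c {a} ha => by
        simp only [Set.mem_setOf_eq] at *
        simp [PiLp.smul_apply, ha] } with hs
  have hne : s ≠ ⊤ := by
    intro h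
    have h1 : (EuclideanSpace.single i (1:ℝ)) ∈ s := h ▸ Submodule.mem_top
    have : (EuclideanSpace.single i (1:ℝ)) i = 0 := h1
    simp [EuclideanSpace.single_apply] at this
  exact Measure.addHaar_submodule volume s hne

lemma ae_coords_ne_zero (hN : 0 < N) :
    ∀ᵐ y : EuclideanSpace ℝ (Fin N), ∀ i, y i ≠ 0 := by
  have hnull : (volume : Measure (EuclideanSpace ℝ (Fin N)))
      (⋃ i : Fin N, {y : EuclideanSpace ℝ (Fin N) | y i = 0}) = 0 :=
    measure_iUnion_null fun i => coord_hyperplane_null hN i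
  rw [MeasureTheory.ae_iff]
  refine measure_mono_null ?_ hnull
  intro y hy
  simp only [Set.mem_setOf_eq, not_forall, not_not] at hy
  obtain ⟨i, hi⟩ := hy
  exact Set.mem_iUnion.2 ⟨i, hi⟩

lemma norm_sq_eq (y : EuclideanSpace ℝ (Fin N)) : ‖y‖ ^ 2 = ∑ i, (y i) ^ 2 := by
  rw [EuclideanSpace.norm_eq, Real.sq_sqrt (by positivity)]
  simp [sq_abs]

/-- Integrability of the comparison function `g y = (1+‖y‖²)^(-m) (‖y‖²)^(-m)`. -/
lemma g_integrable (N : ℕ) (hN : 7 ≤ N) :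
    Integrable (fun y : EuclideanSpace ℝ (Fin N) =>
      (1 + ‖y‖ ^ 2) ^ (-(((N:ℝ) - 2) / 2)) * (‖y‖ ^ 2) ^ (-(((N:ℝ) - 2) / 2))) := by
  have hN0 : 0 < N := by omega
  have hNR : (7:ℝ) ≤ (N:ℝ) := by exact_mod_cast hN
  set m : ℝ := ((N:ℝ) - 2) / 2 with hm
  set q : ℝ := m / N with hq
  have hNpos : (0:ℝ) < N := by linarith
  have hq0 : 0 < q := by
    rw [hq, hm]
    exact div_pos (by linarith) hNpos
  have hNq : (N:ℝ) * q = m := by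
    rw [hq]; field_simp
  have hq1 : 2 * q < 1 := by
    rw [hq, hm, show 2 * (((N:ℝ) - 2) / 2 / N) = ((N:ℝ) - 2) / N from by ring,
      div_lt_one hNpos]
    linarith
  have hq2 : 1 < 4 * q := by
    rw [hq, hm, show 4 * (((N:ℝ) - 2) / 2 / N) = (2 * (N:ℝ) - 4) / N from by ring,
      lt_div_iff₀ hNpos]
    linarith
  have hphi : Integrable (fun t : ℝ => (1 + t ^ 2) ^ (-q) * (t ^ 2) ^ (-q)) :=
    phi_integrable hq0 hq1 hq2
  have hprod_pi : Integrable (fun x : Fin N → ℝ =>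
      ∏ i, ((1 + (x i) ^ 2) ^ (-q) * ((x i) ^ 2) ^ (-q))) :=
    Integrable.fintype_prod (f := fun _ t => (1 + t ^ 2) ^ (-q) * (t ^ 2) ^ (-q))
      (fun _ => hphi)
  have hprod : Integrable (fun y : EuclideanSpace ℝ (Fin N) =>
      ∏ i, ((1 + (y i) ^ 2) ^ (-q) * ((y i) ^ 2) ^ (-q))) := by
    have hmp := EuclideanSpace.volume_preserving_symm_measurableEquiv_toLp (Fin N)
    have := (hmp.integrable_comp_emb
      (MeasurableEquiv.measurableEmbedding _)).2 hprod_pi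
    exact this
  refine hprod.mono' ?_ ?_
  · apply Measurable.aestronglyMeasurable
    fun_prop
  · filter_upwards [ae_coords_ne_zero hN0] with y hy
    set S : ℝ := ∑ i, (y i) ^ 2 with hS
    have hnormS : ‖y‖ ^ 2 = S := norm_sq_eq y
    have i0 : Fin N := ⟨0, hN0⟩
    have hSpos : 0 < S := by
      refine Finset.sum_pos' (fun i _ => sq_nonneg _) ⟨i0, Finset.mem_univ _, ?_⟩
      have := hy i0
      positivity
    have hterm_le : ∀ i : Fin N, (y i) ^ 2 ≤ S :=
      fun i => Finset.single_le_sum (fun j _ => sq_nonneg (y j)) (Finset.mem_univ i)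
    have hcard : (Finset.univ : Finset (Fin N)).card = N := by simp
    -- inequality A
    have hA0 : (0:ℝ) < ∏ i, (1 + (y i) ^ 2) :=
      Finset.prod_pos fun i _ => by positivity
    have hA : ∏ i, (1 + (y i) ^ 2) ≤ (1 + S) ^ N := by
      calc ∏ i, (1 + (y i) ^ 2) ≤ ∏ _i : Fin N, (1 + S) :=
            Finset.prod_le_prod (fun i _ => by positivity)
              (fun i _ => by linarith [hterm_le i])
        _ = (1 + S) ^ N := by rw [Finset.prod_const, hcard]
    have hineqA : (1 + S) ^ (-m) ≤ ∏ i, (1 + (y i) ^ 2) ^ (-q) := by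
      have h1S : (0:ℝ) < 1 + S := by positivity
      calc (1 + S) ^ (-m) = ((1 + S) ^ (N:ℕ)) ^ (-q) := by
            rw [← Real.rpow_natCast (1 + S) N, ← Real.rpow_mul h1S.le]
            congr 1
            rw [← hNq]; ring
        _ ≤ (∏ i, (1 + (y i) ^ 2)) ^ (-q) :=
            Real.rpow_le_rpow_of_nonpos hA0 hA (by linarith)
        _ = ∏ i, (1 + (y i) ^ 2) ^ (-q) :=
            (Real.finset_prod_rpow _ _ (fun i _ => by positivity) _).symm
    -- inequality B
    have hB0 : (0:ℝ) < ∏ i, (y i) ^ 2 :=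
      Finset.prod_pos fun i _ => by have := hy i; positivity
    have hB : ∏ i, (y i) ^ 2 ≤ S ^ N := by
      calc ∏ i, (y i) ^ 2 ≤ ∏ _i : Fin N, S :=
            Finset.prod_le_prod (fun i _ => sq_nonneg _) (fun i _ => hterm_le i)
        _ = S ^ N := by rw [Finset.prod_const, hcard]
    have hineqB : S ^ (-m) ≤ ∏ i, ((y i) ^ 2) ^ (-q) := by
      calc S ^ (-m) = (S ^ (N:ℕ)) ^ (-q) := by
            rw [← Real.rpow_natCast S N, ← Real.rpow_mul hSpos.le]
            congr 1
            rw [← hNq]; ring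
        _ ≤ (∏ i, (y i) ^ 2) ^ (-q) :=
            Real.rpow_le_rpow_of_nonpos hB0 hB (by linarith)
        _ = ∏ i, ((y i) ^ 2) ^ (-q) :=
            (Real.finset_prod_rpow _ _ (fun i _ => sq_nonneg _) _).symm
    -- combine
    have hgn : (0:ℝ) ≤ (1 + ‖y‖ ^ 2) ^ (-m) * (‖y‖ ^ 2) ^ (-m) :=
      mul_nonneg (rpow_nonneg (by positivity) _) (rpow_nonneg (by positivity) _)
    rw [Real.norm_eq_abs, abs_of_nonneg hgn, hnormS]
    calc (1 + S) ^ (-m) * S ^ (-m)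
        ≤ (∏ i, (1 + (y i) ^ 2) ^ (-q)) * ∏ i, ((y i) ^ 2) ^ (-q) :=
          mul_le_mul hineqA hineqB (rpow_nonneg hSpos.le _)
            (Finset.prod_nonneg fun i _ => rpow_nonneg (by positivity) _)
      _ = ∏ i, ((1 + (y i) ^ 2) ^ (-q) * ((y i) ^ 2) ^ (-q)) :=
          (Finset.prod_mul_distrib).symm

end Stmt15Aux

/-- The interaction estimate (4.22) in the proof of Lemma 4.7 of the paper:
for `N ≥ 7` there is `C > 0`, depending only on `N`, such that for all
`0 < δ₂ ≤ δ₁`, `∫_{ℝ^N} U_{δ₁} U_{δ₂} ≤ C (δ₂/δ₁)^((N-2)/2) δ₁²`. -/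
theorem stmt_15 (N : ℕ) (hN : 7 ≤ N) :
    ∃ C : ℝ, 0 < C ∧ ∀ δ₁ δ₂ : ℝ, 0 < δ₂ → δ₂ ≤ δ₁ →
      (∫ x : EuclideanSpace ℝ (Fin N), bubble N δ₁ x * bubble N δ₂ x) ≤
        C * (δ₂ / δ₁) ^ (((N : ℝ) - 2) / 2) * δ₁ ^ 2 := by
  classical
  have hNR : (7:ℝ) ≤ (N:ℝ) := by exact_mod_cast hN
  set m : ℝ := ((N:ℝ) - 2) / 2 with hm
  have hm0 : 0 < m := by rw [hm]; linarith
  set α : ℝ := ((N : ℝ) * ((N : ℝ) - 2)) ^ (((N : ℝ) - 2) / 4) with hα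
  have hα0 : 0 < α := Real.rpow_pos_of_pos (by nlinarith) _
  set g : EuclideanSpace ℝ (Fin N) → ℝ := fun y =>
    (1 + ‖y‖ ^ 2) ^ (-m) * (‖y‖ ^ 2) ^ (-m) with hg
  have hgint : Integrable g := Stmt15Aux.g_integrable N hN
  have hgnn : ∀ y, 0 ≤ g y := fun y =>
    mul_nonneg (Real.rpow_nonneg (by positivity) _) (Real.rpow_nonneg (by positivity) _)
  set I : ℝ := ∫ y, g y with hI
  have hI0 : 0 ≤ I := integral_nonneg hgnn
  refine ⟨α ^ 2 * I + 1, by positivity, ?_⟩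
  intro δ₁ δ₂ hδ₂ hle
  have hδ₁ : 0 < δ₁ := lt_of_lt_of_le hδ₂ hle
  set F : EuclideanSpace ℝ (Fin N) → ℝ := fun x => bubble N δ₁ x * bubble N δ₂ x with hF
  have hbubnn : ∀ (δ : ℝ), 0 ≤ δ → ∀ (x : EuclideanSpace ℝ (Fin N)), 0 ≤ bubble N δ x := by
    intro δ hδ x
    unfold bubble
    apply div_nonneg
    · exact mul_nonneg (Real.rpow_nonneg (by nlinarith) _) (Real.rpow_nonneg hδ _)
    · exact Real.rpow_nonneg (by positivity) _
  -- a.e. nonzero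
  have hae : ∀ᵐ y : EuclideanSpace ℝ (Fin N), y ≠ 0 := by
    rw [MeasureTheory.ae_iff]
    refine measure_mono_null ?_ (Stmt15Aux.coord_hyperplane_null (by omega) ⟨0, by omega⟩)
    intro y hy
    simp only [Set.mem_setOf_eq, not_not] at hy
    simp [hy]
  -- constant in the comparison
  set c : ℝ := α ^ 2 * δ₂ ^ m * δ₁ ^ (-(3 * m)) with hc
  have hc0 : 0 ≤ c := by
    refine mul_nonneg (mul_nonneg (by positivity) ?_) ?_
    · exact Real.rpow_nonneg hδ₂.le _
    · exact Real.rpow_nonneg hδ₁.le _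
  -- pointwise bound for the rescaled integrand
  have hptwise : ∀ y : EuclideanSpace ℝ (Fin N), y ≠ 0 → F (δ₁ • y) ≤ c * g y := by
    intro y hy
    have hny : 0 < ‖y‖ := norm_pos_iff.2 hy
    have hns : ‖δ₁ • y‖ ^ 2 = δ₁ ^ 2 * ‖y‖ ^ 2 := by
      rw [norm_smul, mul_pow, Real.norm_eq_abs, sq_abs]
    have h1y : (0:ℝ) < 1 + ‖y‖ ^ 2 := by positivity
    -- B1 : first bubble computed exactly
    have hB1 : bubble N δ₁ (δ₁ • y) = α * δ₁ ^ (-m) * (1 + ‖y‖ ^ 2) ^ (-m) := by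
      unfold bubble
      rw [← hα, ← hm, hns]
      rw [show δ₁ ^ 2 + δ₁ ^ 2 * ‖y‖ ^ 2 = δ₁ ^ 2 * (1 + ‖y‖ ^ 2) by ring]
      rw [Real.mul_rpow (sq_nonneg δ₁) h1y.le]
      rw [show ((δ₁ ^ 2 : ℝ)) ^ m = δ₁ ^ (2 * m) from by
        rw [← Real.rpow_natCast δ₁ 2, ← Real.rpow_mul hδ₁.le]; norm_num]
      have key2 : δ₁ ^ m * (δ₁ ^ (2 * m))⁻¹ = δ₁ ^ (-m) := by
        rw [← Real.rpow_neg hδ₁.le, ← Real.rpow_add hδ₁]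
        congr 1; ring
      calc α * δ₁ ^ m / (δ₁ ^ (2 * m) * (1 + ‖y‖ ^ 2) ^ m)
          = α * (δ₁ ^ m * (δ₁ ^ (2 * m))⁻¹) * ((1 + ‖y‖ ^ 2) ^ m)⁻¹ := by
            rw [div_eq_mul_inv, mul_inv]; ring
        _ = α * δ₁ ^ (-m) * (1 + ‖y‖ ^ 2) ^ (-m) := by
            rw [key2, Real.rpow_neg h1y.le]
    -- B2 : second bubble bounded
    have hB2 : bubble N δ₂ (δ₁ • y) ≤ α * δ₂ ^ m * δ₁ ^ (-(2 * m)) * (‖y‖ ^ 2) ^ (-m) := by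
      unfold bubble
      rw [← hα, ← hm, hns]
      have hden0 : (0:ℝ) < (δ₁ ^ 2 * ‖y‖ ^ 2) ^ m := Real.rpow_pos_of_pos (by positivity) _
      have hden : (δ₁ ^ 2 * ‖y‖ ^ 2) ^ m ≤ (δ₂ ^ 2 + δ₁ ^ 2 * ‖y‖ ^ 2) ^ m :=
        Real.rpow_le_rpow (by positivity) (by nlinarith) hm0.le
      calc α * δ₂ ^ m / (δ₂ ^ 2 + δ₁ ^ 2 * ‖y‖ ^ 2) ^ m
          ≤ α * δ₂ ^ m / (δ₁ ^ 2 * ‖y‖ ^ 2) ^ m := by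
            apply div_le_div_of_nonneg_left _ hden0 hden
            exact (mul_pos hα0 (Real.rpow_pos_of_pos hδ₂ _)).le
        _ = α * δ₂ ^ m * δ₁ ^ (-(2 * m)) * (‖y‖ ^ 2) ^ (-m) := by
            rw [Real.mul_rpow (sq_nonneg δ₁) (sq_nonneg ‖y‖)]
            rw [show ((δ₁ ^ 2 : ℝ)) ^ m = δ₁ ^ (2 * m) by
              rw [← Real.rpow_natCast δ₁ 2, ← Real.rpow_mul hδ₁.le]; norm_num]
            rw [div_eq_mul_inv, mul_inv, Real.rpow_neg hδ₁.le, Real.rpow_neg (sq_nonneg ‖y‖)]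
            ring
    calc F (δ₁ • y) = bubble N δ₁ (δ₁ • y) * bubble N δ₂ (δ₁ • y) := rfl
      _ ≤ (α * δ₁ ^ (-m) * (1 + ‖y‖ ^ 2) ^ (-m)) *
            (α * δ₂ ^ m * δ₁ ^ (-(2 * m)) * (‖y‖ ^ 2) ^ (-m)) := by
          rw [hB1]
          refine mul_le_mul_of_nonneg_left hB2 ?_
          exact mul_nonneg (mul_nonneg hα0.le (Real.rpow_nonneg hδ₁.le _))
            (Real.rpow_nonneg h1y.le _)
      _ = c * g y := by
          rw [hc, hg]
          have : δ₁ ^ (-m) * δ₁ ^ (-(2 * m)) = δ₁ ^ (-(3 * m)) := by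
            rw [← Real.rpow_add hδ₁]; congr 1; ring
          linear_combination (α ^ 2 * δ₂ ^ m *
            ((1 + ‖y‖ ^ 2) ^ (-m) * (‖y‖ ^ 2) ^ (-m))) * this
  -- change of variables
  have hcov := Measure.integral_comp_smul (volume : Measure (EuclideanSpace ℝ (Fin N))) F δ₁
  rw [finrank_euclideanSpace_fin] at hcov
  have habs : |((δ₁ ^ N : ℝ))⁻¹| = (δ₁ ^ N)⁻¹ := abs_of_pos (by positivity)
  rw [habs, smul_eq_mul] at hcov
  have key : ∫ x, F x = δ₁ ^ N * ∫ y, F (δ₁ • y) := by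
    rw [hcov]
    field_simp
  have hmono : ∫ y, F (δ₁ • y) ≤ c * I := by
    have h1 : (∫ y, F (δ₁ • y)) ≤ ∫ y, c * g y := by
      refine integral_mono_of_nonneg ?_ (hgint.const_mul c) ?_
      · exact Filter.Eventually.of_forall fun y =>
          mul_nonneg (hbubnn δ₁ hδ₁.le _) (hbubnn δ₂ hδ₂.le _)
      · filter_upwards [hae] with y hy
        exact hptwise y hy
    rwa [integral_const_mul] at h1
  have hfinal : δ₁ ^ N * (c * I) = (α ^ 2 * I) * (δ₂ / δ₁) ^ m * δ₁ ^ 2 := by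
    rw [hc, Real.div_rpow hδ₂.le hδ₁.le, div_eq_mul_inv]
    have hpow : (δ₁ : ℝ) ^ (N : ℕ) * δ₁ ^ (-(3 * m)) = δ₁ ^ (2 : ℕ) * (δ₁ ^ m)⁻¹ := by
      rw [← Real.rpow_natCast δ₁ N, ← Real.rpow_natCast δ₁ 2,
        ← Real.rpow_neg hδ₁.le m, ← Real.rpow_add hδ₁, ← Real.rpow_add hδ₁]
      congr 1
      rw [hm]
      push_cast
      ring
    linear_combination (α ^ 2 * δ₂ ^ m * I) * hpow
  calc (∫ x, F x) = δ₁ ^ N * ∫ y, F (δ₁ • y) := key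
    _ ≤ δ₁ ^ N * (c * I) := by
        exact mul_le_mul_of_nonneg_left hmono (by positivity)
    _ = (α ^ 2 * I) * (δ₂ / δ₁) ^ m * δ₁ ^ 2 := hfinal
    _ ≤ (α ^ 2 * I + 1) * (δ₂ / δ₁) ^ m * δ₁ ^ 2 := by
        have h1 : (0:ℝ) ≤ (δ₂ / δ₁) ^ m := Real.rpow_nonneg (by positivity) _
        nlinarith [sq_nonneg δ₁, mul_nonneg h1 (sq_nonneg δ₁)]
end

section
/- Let N ≥ 7 be an integer, α_N := (N(N-2))^{(N-2)/4}, and for δ > 0 let U_δ : ℝ^N → ℝ be U_δ(x) := α_N · δ^{(N-2)/2} / (δ² + |x|²)^{(N-2)/2}. Let ρ > 0. Then there exists a constant C > 0, depending only on N, such that for all δ₁, δ₂ with 0 < δ₂ ≤ δ₁ and √(δ₁δ₂) ≤ ρ, one has ∫_{{x ∈ ℝ^N : √(δ₁δ₂) ≤ |x| ≤ ρ}} U_{δ₁}(x)^{8N/((N-2)(N+2))} · U_{δ₂}(x)^{2N/(N+2)} dx ≤ C · (δ₂/δ₁)^{N/2}. -/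
/-!
For `|x| ≥ r` one has `U_{δ₁} ≤ α_N δ₁^(-(N-2)/2)` and `U_{δ₂}(x) ≤ α_N δ₂^((N-2)/2) |x|^(2-N)`, so
the integrand is at most a constant times `δ₁^(-4N/(N+2)) δ₂^(N(N-2)/(N+2)) |x|^(-s)` with
`s = 2N(N-2)/(N+2)`. As `s > N` exactly when `N > 6`, integrating in polar coordinates over
`|x| ≥ r` gives `c r^(N-s)`, and for `r = √(δ₁δ₂)` the powers of `δ₁, δ₂` combine to
`(δ₂/δ₁)^(N/2)`.
-/

open MeasureTheory

open Set Metric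

lemma pow_smul_indicator_Ici_rpow_neg {n : ℕ} (hn : 1 ≤ n) (r s : ℝ) :
    EqOn (fun y : ℝ => y ^ (n - 1) • (Ici r).indicator (fun y => y ^ (-s)) y)
      ((Ici r).indicator fun y => y ^ ((n : ℝ) - 1 - s)) (Ioi 0) := by
  intro y (hy : 0 < y)
  by_cases hyr : r ≤ y
  · simp only [indicator_of_mem (show y ∈ Ici r from hyr), smul_eq_mul, ← Real.rpow_natCast,
      Nat.cast_sub hn, Nat.cast_one, ← Real.rpow_add hy, sub_eq_add_neg]
  · simp [indicator_of_notMem (show y ∉ Ici r from hyr)]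

section Radial

variable {E : Type*} [NormedAddCommGroup E] [NormedSpace ℝ E] [Nontrivial E]
  [FiniteDimensional ℝ E] [MeasurableSpace E] [BorelSpace E]
  (μ : Measure E) [μ.IsAddHaarMeasure] {r s : ℝ}

local notation "d" => Module.finrank ℝ E

lemma integrableOn_norm_rpow_neg (hr : 0 < r) (hs : (d : ℝ) < s) :
    IntegrableOn (fun x : E => ‖x‖ ^ (-s)) {x | r ≤ ‖x‖} μ := by
  rw [← integrable_indicator_iff (measurableSet_le measurable_const measurable_norm)]
  change Integrable (fun x : E => (Ici r).indicator (fun y => y ^ (-s)) ‖x‖) μ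
  rw [integrable_fun_norm_addHaar, integrableOn_congr_fun
    (pow_smul_indicator_Ici_rpow_neg Module.finrank_pos r s) measurableSet_Ioi,
    IntegrableOn, integrable_indicator_iff measurableSet_Ici, IntegrableOn,
    Measure.restrict_restrict measurableSet_Ici, inter_eq_left.2 (Ici_subset_Ioi.2 hr),
    ← IntegrableOn, integrableOn_Ici_iff_integrableOn_Ioi]
  exact integrableOn_Ioi_rpow_of_lt (by linarith) hr

lemma setIntegral_norm_rpow_neg (hr : 0 < r) (hs : (d : ℝ) < s) :
    ∫ x in {x : E | r ≤ ‖x‖}, ‖x‖ ^ (-s) ∂μ =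
      d * μ.real (ball 0 1) * (r ^ ((d : ℝ) - s) / (s - d)) := by
  rw [← integral_indicator (measurableSet_le measurable_const measurable_norm)]
  change ∫ x, (Ici r).indicator (fun y => y ^ (-s)) ‖x‖ ∂μ = _
  rw [integral_fun_norm_addHaar, setIntegral_congr_fun measurableSet_Ioi
    (pow_smul_indicator_Ici_rpow_neg Module.finrank_pos r s),
    setIntegral_indicator measurableSet_Ici, inter_eq_right.2 (Ici_subset_Ioi.2 hr),
    integral_Ici_eq_integral_Ioi, integral_Ioi_rpow_of_lt (by linarith) hr,
    nsmul_eq_mul, smul_eq_mul, mul_assoc, show (d : ℝ) - 1 - s + 1 = d - s by ring,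
    neg_div, ← div_neg, neg_sub]

end Radial

noncomputable def bubbleConst (N : ℕ) : ℝ := ((N : ℝ) * ((N : ℝ) - 2)) ^ (((N : ℝ) - 2) / 4)

section Bubble

variable {N : ℕ} {δ δ₁ δ₂ : ℝ}

lemma bubbleConst_nonneg (hN : 2 ≤ N) : 0 ≤ bubbleConst N := by
  have : (2 : ℝ) ≤ N := by exact_mod_cast hN
  exact Real.rpow_nonneg (by nlinarith) _

lemma bubbleConst_pos (hN : 2 < N) : 0 < bubbleConst N := by
  have : (2 : ℝ) < N := by exact_mod_cast hN
  exact Real.rpow_pos_of_pos (by nlinarith) _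

lemma continuous_bubble (hδ : δ ≠ 0) : Continuous (bubble N δ) := by
  have hpos (x : EuclideanSpace ℝ (Fin N)) : 0 < δ ^ 2 + ‖x‖ ^ 2 := by positivity
  exact continuous_const.div
    ((continuous_const.add (continuous_norm.pow 2)).rpow_const fun x => .inl (hpos x).ne')
    fun x => (Real.rpow_pos_of_pos (hpos x) _).ne'

lemma bubble_nonneg (hN : 2 ≤ N) (hδ : 0 ≤ δ) (x : EuclideanSpace ℝ (Fin N)) :
    0 ≤ bubble N δ x :=
  have := bubbleConst_nonneg hN
  show 0 ≤ bubbleConst N * _ / _ by positivity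

lemma bubble_le_div_rpow (hN : 2 ≤ N) (hδ : 0 ≤ δ) {x : EuclideanSpace ℝ (Fin N)} {t : ℝ}
    (ht : 0 < t) (htx : t ≤ δ ^ 2 + ‖x‖ ^ 2) :
    bubble N δ x ≤ bubbleConst N * δ ^ (((N : ℝ) - 2) / 2) / t ^ (((N : ℝ) - 2) / 2) := by
  have : (2 : ℝ) ≤ N := by exact_mod_cast hN
  have := bubbleConst_nonneg hN
  show bubbleConst N * _ / _ ≤ _
  gcongr

lemma bubble_le_rpow_neg (hN : 2 ≤ N) (hδ : 0 < δ) (x : EuclideanSpace ℝ (Fin N)) :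
    bubble N δ x ≤ bubbleConst N * δ ^ (-(((N : ℝ) - 2) / 2)) := by
  refine (bubble_le_div_rpow hN hδ.le (by positivity)
    (le_add_of_nonneg_right (sq_nonneg ‖x‖))).trans_eq ?_
  rw [mul_div_assoc, ← Real.rpow_natCast, ← Real.rpow_mul hδ.le, ← Real.rpow_sub hδ]
  congr 2
  push_cast
  ring

lemma bubble_le_rpow_mul_norm_rpow_neg (hN : 2 ≤ N) (hδ : 0 ≤ δ)
    {x : EuclideanSpace ℝ (Fin N)} (hx : x ≠ 0) :
    bubble N δ x ≤ bubbleConst N * δ ^ (((N : ℝ) - 2) / 2) * ‖x‖ ^ (-((N : ℝ) - 2)) := by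
  refine (bubble_le_div_rpow hN hδ (by positivity)
    (le_add_of_nonneg_left (sq_nonneg δ))).trans_eq ?_
  rw [div_eq_mul_inv, ← Real.rpow_natCast, ← Real.rpow_mul (norm_nonneg x),
    ← Real.rpow_neg (norm_nonneg x)]
  congr 2
  push_cast
  ring

lemma bubble_rpow_mul_bubble_rpow_le (hN : 2 ≤ N) {a b : ℝ} (ha : 0 ≤ a) (hb : 0 ≤ b)
    (hδ₁ : 0 < δ₁) (hδ₂ : 0 ≤ δ₂) {x : EuclideanSpace ℝ (Fin N)} (hx : x ≠ 0) :
    bubble N δ₁ x ^ a * bubble N δ₂ x ^ b ≤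
      bubbleConst N ^ (a + b) * (δ₁ ^ (-((N - 2) / 2 * a)) * δ₂ ^ ((N - 2) / 2 * b)) *
        ‖x‖ ^ (-((N - 2) * b)) := by
  have hα := bubbleConst_nonneg hN
  calc bubble N δ₁ x ^ a * bubble N δ₂ x ^ b
      ≤ (bubbleConst N * δ₁ ^ (-(((N : ℝ) - 2) / 2))) ^ a *
          (bubbleConst N * δ₂ ^ (((N : ℝ) - 2) / 2) * ‖x‖ ^ (-((N : ℝ) - 2))) ^ b := by
        have h₁ := bubble_nonneg hN hδ₁.le x
        have h₂ := bubble_nonneg hN hδ₂ x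
        gcongr
        exacts [bubble_le_rpow_neg hN hδ₁ x, bubble_le_rpow_mul_norm_rpow_neg hN hδ₂ hx]
    _ = _ := by
        rw [Real.mul_rpow hα (by positivity), Real.mul_rpow (by positivity) (by positivity),
          Real.mul_rpow hα (by positivity), ← Real.rpow_mul hδ₁.le, ← Real.rpow_mul hδ₂,
          ← Real.rpow_mul (norm_nonneg x), Real.rpow_add_of_nonneg hα ha hb]
        ring_nf

end Bubble

section Integral

variable {N : ℕ} {a b r δ₁ δ₂ : ℝ}

lemma integrableOn_bubble_rpow_mul_bubble_rpow (hN : 2 ≤ N) (ha : 0 ≤ a) (hb : 0 ≤ b)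
    (hs : (N : ℝ) < (N - 2) * b) (hr : 0 < r) (hδ₁ : 0 < δ₁) (hδ₂ : 0 < δ₂) :
    IntegrableOn (fun x : EuclideanSpace ℝ (Fin N) => bubble N δ₁ x ^ a * bubble N δ₂ x ^ b)
      {x | r ≤ ‖x‖} := by
  have : Nonempty (Fin N) := ⟨⟨0, by omega⟩⟩
  have hT : MeasurableSet {x : EuclideanSpace ℝ (Fin N) | r ≤ ‖x‖} :=
    measurableSet_le measurable_const measurable_norm
  refine Integrable.mono' (g := fun x => bubbleConst N ^ (a + b) *
    (δ₁ ^ (-((N - 2) / 2 * a)) * δ₂ ^ ((N - 2) / 2 * b)) * ‖x‖ ^ (-((N - 2) * b)))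
    ?_ ?_ ((ae_restrict_iff' hT).2 <| .of_forall fun x (hx : r ≤ ‖x‖) => ?_)
  · exact (integrableOn_norm_rpow_neg volume hr (by rwa [finrank_euclideanSpace_fin])).const_mul _
  · exact (((continuous_bubble hδ₁.ne').rpow_const fun _ => .inr ha).mul
      ((continuous_bubble hδ₂.ne').rpow_const fun _ => .inr hb)).aestronglyMeasurable
  · have := bubble_nonneg hN hδ₁.le x
    have := bubble_nonneg hN hδ₂.le x
    rw [Real.norm_of_nonneg (by positivity)]
    exact bubble_rpow_mul_bubble_rpow_le hN ha hb hδ₁ hδ₂.le (norm_pos_iff.1 (hr.trans_le hx))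

lemma setIntegral_bubble_rpow_mul_bubble_rpow_le (hN : 2 ≤ N) (ha : 0 ≤ a) (hb : 0 ≤ b)
    (hs : (N : ℝ) < (N - 2) * b) (hr : 0 < r) (hδ₁ : 0 < δ₁) (hδ₂ : 0 < δ₂) :
    ∫ x in {x : EuclideanSpace ℝ (Fin N) | r ≤ ‖x‖}, bubble N δ₁ x ^ a * bubble N δ₂ x ^ b ≤
      bubbleConst N ^ (a + b) * (δ₁ ^ (-((N - 2) / 2 * a)) * δ₂ ^ ((N - 2) / 2 * b)) *
        (N * volume.real (ball (0 : EuclideanSpace ℝ (Fin N)) 1) *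
          (r ^ ((N : ℝ) - (N - 2) * b) / ((N - 2) * b - N))) := by
  have : Nonempty (Fin N) := ⟨⟨0, by omega⟩⟩
  have hs' : (Module.finrank ℝ (EuclideanSpace ℝ (Fin N)) : ℝ) < (N - 2) * b := by
    rwa [finrank_euclideanSpace_fin]
  calc _ ≤ ∫ x in {x : EuclideanSpace ℝ (Fin N) | r ≤ ‖x‖},
          bubbleConst N ^ (a + b) * (δ₁ ^ (-((N - 2) / 2 * a)) * δ₂ ^ ((N - 2) / 2 * b)) *
            ‖x‖ ^ (-((N - 2) * b)) :=
        setIntegral_mono_on (integrableOn_bubble_rpow_mul_bubble_rpow hN ha hb hs hr hδ₁ hδ₂)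
          ((integrableOn_norm_rpow_neg volume hr hs').const_mul _)
          (measurableSet_le measurable_const measurable_norm) fun x (hx : r ≤ ‖x‖) =>
            bubble_rpow_mul_bubble_rpow_le hN ha hb hδ₁ hδ₂.le (norm_pos_iff.1 (hr.trans_le hx))
    _ = _ := by
        rw [integral_const_mul, setIntegral_norm_rpow_neg volume hr hs',
          finrank_euclideanSpace_fin]

end Integral

lemma rpow_neg_mul_rpow_mul_sqrt_mul_rpow {δ₁ δ₂ p q t k : ℝ} (hδ₁ : 0 < δ₁) (hδ₂ : 0 < δ₂)
    (hp : -p + t / 2 = -k) (hq : q + t / 2 = k) :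
    δ₁ ^ (-p) * δ₂ ^ q * Real.sqrt (δ₁ * δ₂) ^ t = (δ₂ / δ₁) ^ k := by
  have hk : (δ₂ / δ₁) ^ k = δ₁ ^ (-k) * δ₂ ^ k := by
    rw [Real.div_rpow hδ₂.le hδ₁.le, Real.rpow_neg hδ₁.le, div_eq_mul_inv, mul_comm]
  rw [hk, ← hp, ← hq, Real.rpow_add hδ₁, Real.rpow_add hδ₂, Real.sqrt_eq_rpow,
    ← Real.rpow_mul (mul_pos hδ₁ hδ₂).le, Real.mul_rpow hδ₁.le hδ₂.le, one_div_mul_eq_div]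
  ring

lemma bubble_exponent_relations {n : ℝ} (hn : 6 < n) :
    n < (n - 2) * (2 * n / (n + 2)) ∧
    -((n - 2) / 2 * (8 * n / ((n - 2) * (n + 2)))) + (n - (n - 2) * (2 * n / (n + 2))) / 2 =
      -(n / 2) ∧
    (n - 2) / 2 * (2 * n / (n + 2)) + (n - (n - 2) * (2 * n / (n + 2))) / 2 = n / 2 := by
  have hn₂ : n - 2 ≠ 0 := by linarith
  have hn₂' : n + 2 ≠ 0 := by linarith
  refine ⟨?_, by field_simp; ring, by field_simp; ring⟩
  rw [← sub_pos, show (n - 2) * (2 * n / (n + 2)) - n = n * (n - 6) / (n + 2) by field_simp; ring]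
  exact div_pos (by nlinarith) (by linarith)

theorem stmt_16_general (N : ℕ) (hN : 7 ≤ N) (ρ : ℝ) :
    ∃ C : ℝ, 0 < C ∧ ∀ δ₁ δ₂ : ℝ, 0 < δ₂ → δ₂ ≤ δ₁ → Real.sqrt (δ₁ * δ₂) ≤ ρ →
      (∫ x in {x : EuclideanSpace ℝ (Fin N) |
            Real.sqrt (δ₁ * δ₂) ≤ ‖x‖ ∧ ‖x‖ ≤ ρ},
          (bubble N δ₁ x) ^ (8 * (N : ℝ) / (((N : ℝ) - 2) * ((N : ℝ) + 2))) *
            (bubble N δ₂ x) ^ (2 * (N : ℝ) / ((N : ℝ) + 2))) ≤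
        C * (δ₂ / δ₁) ^ ((N : ℝ) / 2) := by
  have hN' : (7 : ℝ) ≤ N := by exact_mod_cast hN
  obtain ⟨hs, hexp₁, hexp₂⟩ := bubble_exponent_relations (by linarith : (6 : ℝ) < N)
  set a : ℝ := 8 * N / ((N - 2) * (N + 2))
  set b : ℝ := 2 * N / (N + 2)
  have ha : 0 ≤ a := div_nonneg (by positivity) (mul_nonneg (by linarith) (by positivity))
  have hb : 0 ≤ b := by positivity
  have hball : 0 < volume.real (ball (0 : EuclideanSpace ℝ (Fin N)) 1) :=
    ENNReal.toReal_pos (measure_ball_pos _ _ one_pos).ne' measure_ball_lt_top.ne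
  refine ⟨bubbleConst N ^ (a + b) * (N * volume.real (ball (0 : EuclideanSpace ℝ (Fin N)) 1) /
    ((N - 2) * b - N)), mul_pos (Real.rpow_pos_of_pos (bubbleConst_pos (by omega)) _)
      (div_pos (by positivity) (by linarith)), fun δ₁ δ₂ hδ₂ h₂₁ _ => ?_⟩
  have hδ₁ : 0 < δ₁ := hδ₂.trans_le h₂₁
  have hr : 0 < Real.sqrt (δ₁ * δ₂) := Real.sqrt_pos.2 (mul_pos hδ₁ hδ₂)
  calc _ ≤ ∫ x in {x : EuclideanSpace ℝ (Fin N) | Real.sqrt (δ₁ * δ₂) ≤ ‖x‖},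
          bubble N δ₁ x ^ a * bubble N δ₂ x ^ b :=
        setIntegral_mono_set
          (integrableOn_bubble_rpow_mul_bubble_rpow (by omega) ha hb hs hr hδ₁ hδ₂)
          (.of_forall fun x => by
            have := bubble_nonneg (by omega) hδ₁.le x
            have := bubble_nonneg (by omega) hδ₂.le x
            positivity)
          (.of_forall fun _ hx => hx.1)
    _ ≤ _ := setIntegral_bubble_rpow_mul_bubble_rpow_le (by omega) ha hb hs hr hδ₁ hδ₂
    _ = _ := by
        rw [← rpow_neg_mul_rpow_mul_sqrt_mul_rpow hδ₁ hδ₂ hexp₁ hexp₂]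
        ring

/-- The estimate (3.19) in the proof of Proposition 3.8 of the paper: for `N ≥ 7` and
`ρ > 0`, there is `C > 0`, depending only on `N`, such that for all `0 < δ₂ ≤ δ₁` with
`√(δ₁δ₂) ≤ ρ`,
`∫_{√(δ₁δ₂) ≤ |x| ≤ ρ} U_{δ₁}^(8N/((N-2)(N+2))) U_{δ₂}^(2N/(N+2)) ≤ C (δ₂/δ₁)^(N/2)`. -/
theorem stmt_16 (N : ℕ) (hN : 7 ≤ N) (ρ : ℝ) (hρ : 0 < ρ) :
    ∃ C : ℝ, 0 < C ∧ ∀ δ₁ δ₂ : ℝ, 0 < δ₂ → δ₂ ≤ δ₁ → Real.sqrt (δ₁ * δ₂) ≤ ρ →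
      (∫ x in {x : EuclideanSpace ℝ (Fin N) |
            Real.sqrt (δ₁ * δ₂) ≤ ‖x‖ ∧ ‖x‖ ≤ ρ},
          (bubble N δ₁ x) ^ (8 * (N : ℝ) / (((N : ℝ) - 2) * ((N : ℝ) + 2))) *
            (bubble N δ₂ x) ^ (2 * (N : ℝ) / ((N : ℝ) + 2))) ≤
        C * (δ₂ / δ₁) ^ ((N : ℝ) / 2) :=
  stmt_16_general N hN ρ
end

section
/- Let N ≥ 7 be an integer, α_N := (N(N-2))^{(N-2)/4}, and for δ > 0 let U_δ : ℝ^N → ℝ be U_δ(x) := α_N · δ^{(N-2)/2} / (δ² + |x|²)^{(N-2)/2}. Then there exists a constant C > 0, depending only on N, such that for all δ₁, δ₂ with 0 < δ₂ ≤ δ₁ one has ∫_{{x ∈ ℝ^N : |x| ≤ √(δ₁δ₂)}} U_{δ₂}(x)^{8N/((N-2)(N+2))} · U_{δ₁}(x)^{2N/(N+2)} dx ≤ C · (δ₂/δ₁)^{N/2}. -/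
open MeasureTheory

open Set Metric Module
open scoped ENNReal NNReal

lemma key_lintegral (N : ℕ) {γ R : ℝ} (hγ : 0 < γ) (hγN : γ < N) (hR : 0 < R) :
    ∫⁻ x in Metric.closedBall (0 : EuclideanSpace ℝ (Fin N)) R, ENNReal.ofReal (‖x‖ ^ (-γ)) ≤
      ENNReal.ofReal (R ^ ((N : ℝ) - γ) * (1 + γ / ((N : ℝ) - γ))) *
        volume (Metric.ball (0 : EuclideanSpace ℝ (Fin N)) 1) := by
  set E := EuclideanSpace ℝ (Fin N)
  set μ : Measure E := volume.restrict (Metric.closedBall (0 : E) R) with hμ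
  set v : ℝ≥0∞ := volume (Metric.ball (0 : E) 1) with hv
  have hvfin : v ≠ ⊤ := measure_ball_lt_top.ne
  have hNR : finrank ℝ E = N := finrank_euclideanSpace_fin
  have hmeas : AEMeasurable (fun x : E => ‖x‖ ^ (-γ)) μ := by fun_prop
  have hnn : 0 ≤ᵐ[μ] fun x : E => ‖x‖ ^ (-γ) :=
    Filter.Eventually.of_forall fun x => Real.rpow_nonneg (norm_nonneg x) _
  rw [show (∫⁻ x in Metric.closedBall (0 : E) R, ENNReal.ofReal (‖x‖ ^ (-γ))) =
      ∫⁻ x, ENNReal.ofReal (‖x‖ ^ (-γ)) ∂μ from rfl,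
    lintegral_eq_lintegral_meas_le μ hnn hmeas]
  set T : ℝ := R ^ (-γ) with hT
  have hTpos : 0 < T := Real.rpow_pos_of_pos hR _
  have key_subset : ∀ t : ℝ, 0 < t →
      {a : E | t ≤ ‖a‖ ^ (-γ)} ⊆ Metric.closedBall 0 (t ^ (-γ⁻¹)) := by
    intro t ht a ha
    simp only [mem_setOf_eq] at ha
    have hna : 0 < ‖a‖ := by
      rcases eq_or_lt_of_le (norm_nonneg a) with h | h
      · exfalso
        rw [← h, Real.zero_rpow (neg_ne_zero.mpr hγ.ne')] at ha
        linarith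
      · exact h
    rw [Metric.mem_closedBall, dist_zero_right]
    have h2 := Real.rpow_le_rpow_of_nonpos ht ha
      (by simp [inv_nonneg, hγ.le] : -γ⁻¹ ≤ (0:ℝ))
    rwa [← Real.rpow_mul hna.le, neg_mul_neg, mul_inv_cancel₀ hγ.ne', Real.rpow_one] at h2
  have split : (∫⁻ t in Ioi (0:ℝ), μ {a : E | t ≤ ‖a‖ ^ (-γ)}) ≤
      (∫⁻ t in Ioc (0:ℝ) T, μ {a : E | t ≤ ‖a‖ ^ (-γ)}) +
      ∫⁻ t in Ioi T, μ {a : E | t ≤ ‖a‖ ^ (-γ)} :=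
    le_trans (lintegral_mono_set Ioi_subset_Ioc_union_Ioi) (lintegral_union_le _ _ _)
  refine le_trans split ?_
  have piece1 : (∫⁻ t in Ioc (0:ℝ) T, μ {a : E | t ≤ ‖a‖ ^ (-γ)}) ≤
      ENNReal.ofReal (R ^ ((N : ℝ) - γ)) * v := by
    have hb : ∀ t ∈ Ioc (0:ℝ) T, μ {a : E | t ≤ ‖a‖ ^ (-γ)} ≤
        ENNReal.ofReal (R ^ (N : ℕ)) * v := by
      intro t _
      calc μ {a : E | t ≤ ‖a‖ ^ (-γ)} ≤ μ univ := measure_mono (subset_univ _)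
        _ = volume (Metric.closedBall (0 : E) R) := by rw [hμ, Measure.restrict_apply_univ]
        _ = ENNReal.ofReal (R ^ (N : ℕ)) * v := by
            rw [Measure.addHaar_closedBall _ _ hR.le, hNR]
    calc (∫⁻ t in Ioc (0:ℝ) T, μ {a : E | t ≤ ‖a‖ ^ (-γ)}) ≤
        ∫⁻ _ in Ioc (0:ℝ) T, ENNReal.ofReal (R ^ (N : ℕ)) * v :=
          setLIntegral_mono' measurableSet_Ioc hb
      _ = ENNReal.ofReal (R ^ (N : ℕ)) * v * ENNReal.ofReal T := by
          rw [setLIntegral_const, Real.volume_Ioc, sub_zero]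
      _ = ENNReal.ofReal (R ^ ((N : ℝ) - γ)) * v := by
          rw [mul_right_comm, ← ENNReal.ofReal_mul (by positivity), hT,
            ← Real.rpow_natCast R N, ← Real.rpow_add hR, ← sub_eq_add_neg]
  have piece2 : (∫⁻ t in Ioi T, μ {a : E | t ≤ ‖a‖ ^ (-γ)}) ≤
      ENNReal.ofReal (R ^ ((N : ℝ) - γ) * (γ / ((N : ℝ) - γ))) * v := by
    have hb : ∀ t ∈ Ioi T, μ {a : E | t ≤ ‖a‖ ^ (-γ)} ≤
        ENNReal.ofReal (t ^ (-γ⁻¹ * (N : ℕ))) * v := by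
      intro t ht
      have ht0 : 0 < t := hTpos.trans ht
      calc μ {a : E | t ≤ ‖a‖ ^ (-γ)} ≤ volume {a : E | t ≤ ‖a‖ ^ (-γ)} :=
            Measure.le_iff'.1 Measure.restrict_le_self _
        _ ≤ volume (Metric.closedBall (0 : E) (t ^ (-γ⁻¹))) :=
            measure_mono (key_subset t ht0)
        _ = ENNReal.ofReal ((t ^ (-γ⁻¹)) ^ (N : ℕ)) * v := by
            rw [Measure.addHaar_closedBall _ _ (Real.rpow_nonneg ht0.le _), hNR]
        _ = ENNReal.ofReal (t ^ (-γ⁻¹ * (N : ℕ))) * v := by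
            rw [← Real.rpow_natCast (t ^ (-γ⁻¹)) N, ← Real.rpow_mul ht0.le]
    have hlt : -γ⁻¹ * (N : ℕ) < -1 := by
      rw [neg_mul, neg_lt_neg_iff, lt_inv_mul_iff₀ hγ, mul_one]
      exact hγN
    calc (∫⁻ t in Ioi T, μ {a : E | t ≤ ‖a‖ ^ (-γ)}) ≤
        ∫⁻ t in Ioi T, ENNReal.ofReal (t ^ (-γ⁻¹ * (N : ℕ))) * v :=
          setLIntegral_mono' measurableSet_Ioi hb
      _ = (∫⁻ t in Ioi T, ENNReal.ofReal (t ^ (-γ⁻¹ * (N : ℕ)))) * v :=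
          lintegral_mul_const' _ _ hvfin
      _ = ENNReal.ofReal (∫ t in Ioi T, t ^ (-γ⁻¹ * (N : ℕ))) * v := by
          rw [← ofReal_integral_eq_lintegral_ofReal (integrableOn_Ioi_rpow_of_lt hlt hTpos)
            (by
              filter_upwards [ae_restrict_mem measurableSet_Ioi] with t ht
              exact Real.rpow_nonneg (hTpos.trans ht).le _)]
      _ = ENNReal.ofReal (R ^ ((N : ℝ) - γ) * (γ / ((N : ℝ) - γ))) * v := by
          rw [integral_Ioi_rpow_of_lt hlt hTpos]
          congr 1
          rw [hT, ← Real.rpow_mul hR.le]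
          rw [show -γ * (-γ⁻¹ * (N : ℕ) + 1) = (N : ℝ) - γ by
            field_simp
            ring]
          have hsub : (0:ℝ) < (N : ℝ) - γ := sub_pos.2 hγN
          have hne : ((N:ℝ) - γ) ≠ 0 := hsub.ne'
          have hne2 : (-(N:ℝ) + γ) ≠ 0 := fun h => hne (by linarith)
          congr 1
          field_simp
          ring
  have hsub : (0:ℝ) < (N : ℝ) - γ := sub_pos.2 hγN
  refine le_trans (add_le_add piece1 piece2) (le_of_eq ?_)
  have hq : R ^ ((N : ℝ) - γ) * (1 + γ / ((N : ℝ) - γ)) =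
      R ^ ((N : ℝ) - γ) + R ^ ((N : ℝ) - γ) * (γ / ((N : ℝ) - γ)) := by ring
  rw [hq, ENNReal.ofReal_add (Real.rpow_nonneg hR.le _)
    (mul_nonneg (Real.rpow_nonneg hR.le _) (div_nonneg hγ.le hsub.le)), add_mul]


set_option maxHeartbeats 1000000

/-- The estimate (3.25) in the proof of Proposition 3.8 of the paper: for `N ≥ 7`
there is `C > 0`, depending only on `N`, such that for all `0 < δ₂ ≤ δ₁`,
`∫_{|x| ≤ √(δ₁δ₂)} U_{δ₂}^(8N/((N-2)(N+2))) U_{δ₁}^(2N/(N+2)) ≤ C (δ₂/δ₁)^(N/2)`. -/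
theorem stmt_18 (N : ℕ) (hN : 7 ≤ N) :
    ∃ C : ℝ, 0 < C ∧ ∀ δ₁ δ₂ : ℝ, 0 < δ₂ → δ₂ ≤ δ₁ →
      (∫ x in {x : EuclideanSpace ℝ (Fin N) | ‖x‖ ≤ Real.sqrt (δ₁ * δ₂)},
          (bubble N δ₂ x) ^ (8 * (N : ℝ) / (((N : ℝ) - 2) * ((N : ℝ) + 2))) *
            (bubble N δ₁ x) ^ (2 * (N : ℝ) / ((N : ℝ) + 2))) ≤
        C * (δ₂ / δ₁) ^ ((N : ℝ) / 2) := by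
  have hn : (7 : ℝ) ≤ (N : ℝ) := by exact_mod_cast hN
  set E := EuclideanSpace ℝ (Fin N) with hE
  haveI : NeZero N := ⟨by omega⟩
  set a : ℝ := 8 * (N : ℝ) / (((N : ℝ) - 2) * ((N : ℝ) + 2)) with ha_def
  set b : ℝ := 2 * (N : ℝ) / ((N : ℝ) + 2) with hb_def
  set e : ℝ := ((N : ℝ) - 2) / 2 with he_def
  set γ : ℝ := 8 * (N : ℝ) / ((N : ℝ) + 2) with hγ_def
  set α : ℝ := ((N : ℝ) * ((N : ℝ) - 2)) ^ (((N : ℝ) - 2) / 4) with hα_def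
  have hn2 : (0 : ℝ) < (N : ℝ) - 2 := by linarith
  have hnp2 : (0 : ℝ) < (N : ℝ) + 2 := by linarith
  have ha : 0 ≤ a := by positivity
  have hb : 0 ≤ b := by positivity
  have hα : 0 < α := Real.rpow_pos_of_pos (by nlinarith) _
  have hγ : 0 < γ := by positivity
  have hγN : γ < (N : ℝ) := by
    rw [hγ_def, div_lt_iff₀ hnp2]
    nlinarith
  have hsub : (0 : ℝ) < (N : ℝ) - γ := sub_pos.2 hγN
  set v : ℝ≥0∞ := volume (Metric.ball (0 : E) 1) with hv
  have hvfin : v ≠ ⊤ := measure_ball_lt_top.ne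
  set C₀ : ℝ := α ^ a * α ^ b * ((1 + γ / ((N : ℝ) - γ)) * v.toReal) with hC₀
  have hC₀nn : 0 ≤ C₀ := by positivity
  refine ⟨C₀ + 1, by positivity, ?_⟩
  intro δ₁ δ₂ hδ₂ hle
  have hδ₁ : 0 < δ₁ := lt_of_lt_of_le hδ₂ hle
  set R : ℝ := Real.sqrt (δ₁ * δ₂) with hR_def
  have hR : 0 < R := Real.sqrt_pos.2 (by positivity)
  have hS : {x : E | ‖x‖ ≤ R} = Metric.closedBall (0 : E) R := by
    ext x; simp [Metric.mem_closedBall, dist_zero_right]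
  set f : E → ℝ := fun x => (bubble N δ₂ x) ^ a * (bubble N δ₁ x) ^ b with hf_def
  -- continuity
  have hcb : ∀ δ : ℝ, 0 < δ → Continuous (bubble N δ) := by
    intro δ hδ
    have hpos : ∀ x : E, (0 : ℝ) < δ ^ 2 + ‖x‖ ^ 2 :=
      fun x => add_pos_of_pos_of_nonneg (pow_pos hδ 2) (sq_nonneg _)
    exact continuous_const.div
      ((continuous_const.add (continuous_norm.pow 2)).rpow_const fun x => Or.inl (hpos x).ne')
      (fun x => (Real.rpow_pos_of_pos (hpos x) _).ne')
  have hcont : Continuous f :=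
    ((hcb δ₂ hδ₂).rpow_const fun x => Or.inr ha).mul
      ((hcb δ₁ hδ₁).rpow_const fun x => Or.inr hb)
  -- nonnegativity
  have hbubnn : ∀ δ : ℝ, 0 ≤ δ → ∀ x : E, 0 ≤ bubble N δ x := by
    intro δ hδ x
    unfold bubble
    have h1 : (0 : ℝ) ≤ (N : ℝ) * ((N : ℝ) - 2) := by nlinarith
    positivity
  have hfnn : ∀ x : E, 0 ≤ f x := fun x =>
    mul_nonneg (Real.rpow_nonneg (hbubnn δ₂ hδ₂.le x) _)
      (Real.rpow_nonneg (hbubnn δ₁ hδ₁.le x) _)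
  -- pointwise bound
  set Kc : ℝ := α ^ a * α ^ b * (δ₂ ^ (e * a) * δ₁ ^ (-(e * b))) with hKc_def
  have hKcnn : 0 ≤ Kc := by positivity
  have hptw : ∀ x : E, x ≠ 0 → f x ≤ Kc * ‖x‖ ^ (-γ) := by
    intro x hx
    have hxn : 0 < ‖x‖ := norm_pos_iff.2 hx
    have hγ2ea : 2 * e * a = γ := by
      rw [hγ_def, he_def, ha_def]
      field_simp
    have hsq : ∀ y : ℝ, 0 ≤ y → y ^ ((2:ℝ) * e) = ((y ^ 2 : ℝ)) ^ e := by
      intro y hy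
      rw [Real.rpow_mul hy, show (2:ℝ) = ((2:ℕ):ℝ) by norm_num, Real.rpow_natCast]
    have h1 : (bubble N δ₂ x) ^ a ≤ α ^ a * δ₂ ^ (e * a) * ‖x‖ ^ (-γ) := by
      have hden : ‖x‖ ^ ((2:ℝ) * e) ≤ (δ₂ ^ 2 + ‖x‖ ^ 2) ^ e := by
        rw [hsq _ (norm_nonneg x)]
        exact Real.rpow_le_rpow (by positivity) (by nlinarith [sq_nonneg δ₂]) (by positivity)
      have hb1 : bubble N δ₂ x ≤ α * δ₂ ^ e / ‖x‖ ^ ((2:ℝ) * e) := by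
        unfold bubble
        exact div_le_div_of_nonneg_left
          (mul_nonneg hα.le (Real.rpow_nonneg hδ₂.le _))
          (Real.rpow_pos_of_pos (by positivity) _) hden
      calc (bubble N δ₂ x) ^ a ≤ (α * δ₂ ^ e / ‖x‖ ^ ((2:ℝ) * e)) ^ a :=
            Real.rpow_le_rpow (hbubnn δ₂ hδ₂.le x) hb1 ha
        _ = α ^ a * δ₂ ^ (e * a) * ‖x‖ ^ (-(2 * e * a)) := by
            rw [Real.div_rpow (mul_nonneg hα.le (Real.rpow_nonneg hδ₂.le _))
                (Real.rpow_nonneg (norm_nonneg x) _),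
              Real.mul_rpow hα.le (Real.rpow_nonneg hδ₂.le _),
              ← Real.rpow_mul hδ₂.le,
              ← Real.rpow_mul (norm_nonneg x),
              div_eq_mul_inv, ← Real.rpow_neg (norm_nonneg x)]
        _ = α ^ a * δ₂ ^ (e * a) * ‖x‖ ^ (-γ) := by rw [hγ2ea]
    have h2 : (bubble N δ₁ x) ^ b ≤ α ^ b * δ₁ ^ (-(e * b)) := by
      have hden : δ₁ ^ ((2:ℝ) * e) ≤ (δ₁ ^ 2 + ‖x‖ ^ 2) ^ e := by
        rw [hsq _ hδ₁.le]
        exact Real.rpow_le_rpow (by positivity) (by nlinarith [sq_nonneg ‖x‖]) (by positivity)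
      have hb1 : bubble N δ₁ x ≤ α * δ₁ ^ e / δ₁ ^ ((2:ℝ) * e) := by
        unfold bubble
        exact div_le_div_of_nonneg_left
          (mul_nonneg hα.le (Real.rpow_nonneg hδ₁.le _))
          (Real.rpow_pos_of_pos hδ₁ _) hden
      calc (bubble N δ₁ x) ^ b ≤ (α * δ₁ ^ e / δ₁ ^ ((2:ℝ) * e)) ^ b :=
            Real.rpow_le_rpow (hbubnn δ₁ hδ₁.le x) hb1 hb
        _ = α ^ b * δ₁ ^ (-(e * b)) := by
            rw [mul_div_assoc, ← Real.rpow_sub hδ₁, Real.mul_rpow hα.le (Real.rpow_nonneg hδ₁.le _),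
              ← Real.rpow_mul hδ₁.le, show (e - 2 * e) * b = -(e * b) by ring]
    calc f x ≤ (α ^ a * δ₂ ^ (e * a) * ‖x‖ ^ (-γ)) * (α ^ b * δ₁ ^ (-(e * b))) := by
          exact mul_le_mul h1 h2 (Real.rpow_nonneg (hbubnn δ₁ hδ₁.le x) _)
            (mul_nonneg (mul_nonneg (Real.rpow_nonneg hα.le _) (Real.rpow_nonneg hδ₂.le _))
              (Real.rpow_nonneg (norm_nonneg x) _))
      _ = Kc * ‖x‖ ^ (-γ) := by rw [hKc_def]; ring
  -- ae x ≠ 0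
  have h0 : ∀ᵐ x : E ∂volume, x ≠ 0 := by
    refine ae_iff.2 ?_
    have : {x : E | ¬x ≠ 0} = {(0 : E)} := by ext y; simp
    rw [this]
    exact measure_singleton 0
  -- lintegral chain
  set L : ℝ≥0∞ := ∫⁻ x in Metric.closedBall (0 : E) R, ENNReal.ofReal (f x) with hL_def
  have hL : L ≤ ENNReal.ofReal Kc *
      (ENNReal.ofReal (R ^ ((N : ℝ) - γ) * (1 + γ / ((N : ℝ) - γ))) * v) := by
    have step1 : L ≤ ∫⁻ x in Metric.closedBall (0 : E) R, ENNReal.ofReal (Kc * ‖x‖ ^ (-γ)) := by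
      refine lintegral_mono_ae ?_
      filter_upwards [ae_restrict_of_ae h0] with x hx
      exact ENNReal.ofReal_le_ofReal (hptw x hx)
    have step2 : (∫⁻ x in Metric.closedBall (0 : E) R, ENNReal.ofReal (Kc * ‖x‖ ^ (-γ)))
        = ENNReal.ofReal Kc * ∫⁻ x in Metric.closedBall (0 : E) R, ENNReal.ofReal (‖x‖ ^ (-γ)) := by
      simp_rw [ENNReal.ofReal_mul hKcnn]
      exact lintegral_const_mul' _ _ ENNReal.ofReal_ne_top
    refine le_trans step1 (le_of_eq step2 |>.trans ?_)
    exact mul_le_mul_right (key_lintegral N hγ hγN hR) _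
  -- from Bochner to lintegral
  have hint : (∫ x in {x : E | ‖x‖ ≤ R}, f x) = L.toReal := by
    rw [hS, hL_def]
    exact integral_eq_lintegral_of_nonneg_ae (Filter.Eventually.of_forall hfnn)
      hcont.aestronglyMeasurable.restrict
  rw [hint]
  have hfin : ENNReal.ofReal Kc *
      (ENNReal.ofReal (R ^ ((N : ℝ) - γ) * (1 + γ / ((N : ℝ) - γ))) * v) ≠ ⊤ :=
    ENNReal.mul_ne_top ENNReal.ofReal_ne_top (ENNReal.mul_ne_top ENNReal.ofReal_ne_top hvfin)
  have htoreal : L.toReal ≤ Kc * (R ^ ((N : ℝ) - γ) * (1 + γ / ((N : ℝ) - γ)) * v.toReal) := by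
    refine le_trans (ENNReal.toReal_mono hfin hL) (le_of_eq ?_)
    rw [ENNReal.toReal_mul, ENNReal.toReal_mul, ENNReal.toReal_ofReal hKcnn,
      ENNReal.toReal_ofReal (by positivity)]
  refine le_trans htoreal ?_
  -- final real algebra
  have h2ne : ((N : ℝ) - 2) ≠ 0 := hn2.ne'
  have hp2ne : ((N : ℝ) + 2) ≠ 0 := hnp2.ne'
  have hRpow : R ^ ((N : ℝ) - γ) = δ₁ ^ (((N : ℝ) - γ) / 2) * δ₂ ^ (((N : ℝ) - γ) / 2) := by
    rw [hR_def, Real.sqrt_eq_rpow, ← Real.rpow_mul (by positivity),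
      show 1 / 2 * ((N : ℝ) - γ) = ((N : ℝ) - γ) / 2 by ring,
      Real.mul_rpow hδ₁.le hδ₂.le]
  have h1 : δ₂ ^ (e * a) * δ₂ ^ (((N : ℝ) - γ) / 2) = δ₂ ^ ((N : ℝ) / 2) := by
    rw [← Real.rpow_add hδ₂]
    congr 1
    rw [he_def, ha_def, hγ_def]
    field_simp
    ring
  have h2 : δ₁ ^ (-(e * b)) * δ₁ ^ (((N : ℝ) - γ) / 2) = (δ₁ ^ ((N : ℝ) / 2))⁻¹ := by
    rw [← Real.rpow_add hδ₁, ← Real.rpow_neg hδ₁.le]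
    congr 1
    rw [he_def, hb_def, hγ_def]
    field_simp
    ring
  have hmain : δ₂ ^ (e * a) * δ₁ ^ (-(e * b)) * R ^ ((N : ℝ) - γ)
      = (δ₂ / δ₁) ^ ((N : ℝ) / 2) := by
    rw [hRpow, Real.div_rpow hδ₂.le hδ₁.le]
    calc δ₂ ^ (e * a) * δ₁ ^ (-(e * b)) *
        (δ₁ ^ (((N : ℝ) - γ) / 2) * δ₂ ^ (((N : ℝ) - γ) / 2))
        = (δ₂ ^ (e * a) * δ₂ ^ (((N : ℝ) - γ) / 2)) *
          (δ₁ ^ (-(e * b)) * δ₁ ^ (((N : ℝ) - γ) / 2)) := by ring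
      _ = δ₂ ^ ((N : ℝ) / 2) * (δ₁ ^ ((N : ℝ) / 2))⁻¹ := by rw [h1, h2]
      _ = δ₂ ^ ((N : ℝ) / 2) / δ₁ ^ ((N : ℝ) / 2) := (div_eq_mul_inv _ _).symm
  have hkey : Kc * (R ^ ((N : ℝ) - γ) * (1 + γ / ((N : ℝ) - γ)) * v.toReal)
      = C₀ * (δ₂ / δ₁) ^ ((N : ℝ) / 2) := by
    rw [hC₀, hKc_def, ← hmain]
    ring
  rw [hkey]
  exact mul_le_mul_of_nonneg_right (by linarith) (Real.rpow_nonneg (by positivity) _)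
end

section
/- Let N ≥ 7 be an integer, p := (N+2)/(N-2), α_N := (N(N-2))^{(N-2)/4}, and for δ > 0 let U_δ : ℝ^N → ℝ be U_δ(x) := α_N · δ^{(N-2)/2} / (δ² + |x|²)^{(N-2)/2}. Fix ρ > 0. Then for all sequences (δ₁ₖ), (δ₂ₖ) of strictly positive reals with δ₁ₖ → 0 and δ₂ₖ/δ₁ₖ → 0 as k → ∞, one has lim_{k→∞} (δ₁ₖ/δ₂ₖ)^{(N-2)/2} · ∫_{{x ∈ ℝ^N : √(δ₁ₖδ₂ₖ) ≤ |x| ≤ ρ}} U_{δ₁ₖ}(x)^p · U_{δ₂ₖ}(x) dx = α_N^{2N/(N-2)} · ∫_{ℝ^N} |y|^{-(N-2)} · (1+|y|²)^{-(N+2)/2} dy. -/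
/-!
Rescale `x = δ₁ y` and put `ε = δ₂ / δ₁`. Since `U_δ(t y) = t^(-(N-2)/2) U_{δ/t}(y)`, the
normalised integral becomes `α_N^(2N/(N-2))` times the integral of
`(ε² + |y|²)^(-(N-2)/2) (1 + |y|²)^(-(N+2)/2)` over the annulus `√ε ≤ |y| ≤ ρ/δ₁`, which exhausts
`ℝ^N \ {0}`. This kernel increases to `|y|^(-(N-2)) (1 + |y|²)^(-(N+2)/2)` as `ε → 0`, which is
integrable (near `0` because `N - 2 < N`, at infinity because `N < N + 2`), so dominated
convergence gives the limit.
-/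

open MeasureTheory Filter Set Topology Pointwise

def annulus {E : Type*} [Norm E] (a b : ℝ) : Set E := {x | a ≤ ‖x‖ ∧ ‖x‖ ≤ b}

section Annulus

variable {E : Type*} [NormedAddCommGroup E]

theorem measurableSet_annulus [MeasurableSpace E] [OpensMeasurableSpace E] (a b : ℝ) :
    MeasurableSet (annulus a b : Set E) :=
  (measurableSet_le measurable_const measurable_norm).inter
    (measurableSet_le measurable_norm measurable_const)

theorem smul_annulus [NormedSpace ℝ E] {t : ℝ} (ht : 0 < t) (a b : ℝ) :
    t • (annulus a b : Set E) = annulus (t * a) (t * b) := by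
  ext x
  rw [mem_smul_set_iff_inv_smul_mem₀ ht.ne']
  simp only [annulus, mem_ofPred_eq, norm_smul, Real.norm_of_nonneg (inv_nonneg.2 ht.le),
    ← div_eq_inv_mul, le_div_iff₀ ht, div_le_iff₀ ht, mul_comm t]

theorem tendsto_setIntegral_annulus_of_dominated {ι G : Type*} [NormedAddCommGroup G]
    [NormedSpace ℝ G] [MeasurableSpace E] [OpensMeasurableSpace E] {μ : Measure E}
    [NullSingletonClass μ]
    {l : Filter ι} [l.IsCountablyGenerated] {F : ι → E → G} {f : E → G} {bound : E → ℝ}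
    {a b : ι → ℝ} (ha : Tendsto a l (𝓝 0)) (hb : Tendsto b l atTop)
    (hF_meas : ∀ᶠ i in l, AEStronglyMeasurable (F i) μ)
    (h_bound : ∀ᶠ i in l, ∀ᵐ y ∂μ, ‖F i y‖ ≤ bound y) (bound_integrable : Integrable bound μ)
    (h_lim : ∀ᵐ y ∂μ, Tendsto (fun i => F i y) l (𝓝 (f y))) :
    Tendsto (fun i => ∫ y in annulus (a i) (b i), F i y ∂μ) l (𝓝 (∫ y, f y ∂μ)) := by
  simp_rw [← integral_indicator (measurableSet_annulus _ _)]
  refine tendsto_integral_filter_of_dominated_convergence bound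
    (hF_meas.mono fun i hi => hi.indicator (measurableSet_annulus _ _))
    (h_bound.mono fun i hi => hi.mono fun y hy => ?_) bound_integrable ?_
  · exact (norm_indicator_le_norm_self _ _).trans hy
  · have h_ne : ∀ᵐ y ∂μ, y ≠ 0 := compl_mem_ae_iff.2 (measure_singleton 0)
    filter_upwards [h_lim, h_ne] with y hy hy0
    have h_mem : ∀ᶠ i in l, y ∈ annulus (a i) (b i) :=
      ((ha.eventually_le_const (norm_pos_iff.2 hy0)).and (hb.eventually_ge_atTop ‖y‖)).mono
        fun i hi => ⟨hi.1, hi.2⟩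
    exact hy.congr' (h_mem.mono fun i hi => (indicator_of_mem hi _).symm)

end Annulus

theorem integrable_norm_rpow_neg_mul_one_add_norm_sq_rpow {E : Type*} [NormedAddCommGroup E]
    [NormedSpace ℝ E] [FiniteDimensional ℝ E] [MeasurableSpace E] [BorelSpace E]
    {μ : Measure E} [μ.IsAddHaarMeasure] {a b : ℝ} (ha₀ : 0 ≤ a)
    (ha : a < Module.finrank ℝ E) (hb : (Module.finrank ℝ E : ℝ) < b) :
    Integrable (fun y : E => ‖y‖ ^ (-a) * (1 + ‖y‖ ^ 2) ^ (-(b / 2))) μ := by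
  have h_meas : AEStronglyMeasurable (fun y : E => ‖y‖ ^ (-a) * (1 + ‖y‖ ^ 2) ^ (-(b / 2))) μ :=
    ((measurable_norm.pow_const _).mul
        (((measurable_norm.pow_const 2).const_add 1).pow_const _)).aestronglyMeasurable
  have h_tail_le_one : ∀ y : E, (1 + ‖y‖ ^ 2) ^ (-(b / 2)) ≤ 1 := fun y =>
    Real.rpow_le_one_of_one_le_of_nonpos (by nlinarith [norm_nonneg y]) (by
      have : (0 : ℝ) ≤ Module.finrank ℝ E := Nat.cast_nonneg _
      linarith)
  rw [← integrableOn_univ, ← union_compl_self (Metric.ball (0 : E) 1)]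
  refine IntegrableOn.union ?_ ?_
  · refine integrableOn_ball_of_norm_le_rpow (C := 1) (α := a) ?_ ha
      (ae_of_all _ fun y => ?_) h_meas
    · exact_mod_cast ha₀.trans_lt ha
    · rw [norm_mul, one_mul, Real.norm_of_nonneg (Real.rpow_nonneg (norm_nonneg _) _),
        Real.norm_of_nonneg (Real.rpow_nonneg (by positivity) _)]
      exact mul_le_of_le_one_right (Real.rpow_nonneg (norm_nonneg _) _) (h_tail_le_one y)
  · refine Integrable.mono' (integrable_rpow_neg_one_add_norm_sq hb).restrict h_meas.restrict ?_
    rw [ae_restrict_iff' measurableSet_ball.compl]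
    refine ae_of_all _ fun y hy => ?_
    have hy1 : 1 ≤ ‖y‖ := by simpa using hy
    rw [norm_mul, Real.norm_of_nonneg (Real.rpow_nonneg (norm_nonneg _) _),
      Real.norm_of_nonneg (Real.rpow_nonneg (by positivity) _), neg_div]
    exact mul_le_of_le_one_left (Real.rpow_nonneg (by positivity) _)
      (Real.rpow_le_one_of_one_le_of_nonpos hy1 (neg_nonpos.2 ha₀))

namespace bubble

variable {N : ℕ}

theorem nonneg (hN : 2 ≤ N) {δ : ℝ} (hδ : 0 ≤ δ) (x : EuclideanSpace ℝ (Fin N)) :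
    0 ≤ bubble N δ x := by
  have : (0 : ℝ) ≤ (N : ℝ) - 2 := by
    have : (2 : ℝ) ≤ N := by exact_mod_cast hN
    linarith
  unfold bubble
  positivity

theorem eq_mul_rpow_neg {δ : ℝ} (hδ : 0 < δ) (x : EuclideanSpace ℝ (Fin N)) :
    bubble N δ x = ((N : ℝ) * ((N : ℝ) - 2)) ^ (((N : ℝ) - 2) / 4) * δ ^ (((N : ℝ) - 2) / 2) *
      (δ ^ 2 + ‖x‖ ^ 2) ^ (-(((N : ℝ) - 2) / 2)) := by
  rw [bubble, Real.rpow_neg (by positivity), div_eq_mul_inv]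

theorem smul {δ t : ℝ} (hδ : 0 < δ) (ht : 0 < t) (x : EuclideanSpace ℝ (Fin N)) :
    bubble N δ (t • x) = t ^ (-(((N : ℝ) - 2) / 2)) * bubble N (δ / t) x := by
  set m := ((N : ℝ) - 2) / 2
  have h_num : δ ^ m = t ^ m * (δ / t) ^ m := by
    rw [← Real.mul_rpow ht.le (by positivity), mul_div_cancel₀ _ ht.ne']
  have h_den : (δ ^ 2 + ‖t • x‖ ^ 2) ^ (-m) =
      t ^ (-m) * t ^ (-m) * ((δ / t) ^ 2 + ‖x‖ ^ 2) ^ (-m) := by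
    have : δ ^ 2 + ‖t • x‖ ^ 2 = (t * t) * ((δ / t) ^ 2 + ‖x‖ ^ 2) := by
      rw [norm_smul, Real.norm_of_nonneg ht.le]
      field_simp
    rw [this, Real.mul_rpow (by positivity) (by positivity), Real.mul_rpow ht.le ht.le]
  have h_cancel : t ^ m * t ^ (-m) = 1 := by
    rw [← Real.rpow_add ht, add_neg_cancel, Real.rpow_zero]
  rw [eq_mul_rpow_neg hδ, eq_mul_rpow_neg (div_pos hδ ht), h_num, h_den]
  linear_combination (((N : ℝ) * ((N : ℝ) - 2)) ^ (((N : ℝ) - 2) / 4) * (δ / t) ^ m *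
    t ^ (-m) * ((δ / t) ^ 2 + ‖x‖ ^ 2) ^ (-m)) * h_cancel

theorem one_rpow (hN : 2 < N) (x : EuclideanSpace ℝ (Fin N)) :
    bubble N 1 x ^ (((N : ℝ) + 2) / ((N : ℝ) - 2)) =
      (((N : ℝ) * ((N : ℝ) - 2)) ^ (((N : ℝ) - 2) / 4)) ^ (((N : ℝ) + 2) / ((N : ℝ) - 2)) *
        (1 + ‖x‖ ^ 2) ^ (-(((N : ℝ) + 2) / 2)) := by
  have hN' : (0 : ℝ) < (N : ℝ) - 2 := by
    have : (2 : ℝ) < N := by exact_mod_cast hN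
    linarith
  rw [eq_mul_rpow_neg one_pos, Real.one_rpow, mul_one, one_pow,
    Real.mul_rpow (by positivity) (by positivity),
    ← Real.rpow_mul (x := 1 + ‖x‖ ^ 2) (by positivity)]
  congr 2
  field_simp

theorem rpow_neg_mul {ε : ℝ} (hε : 0 < ε) (x : EuclideanSpace ℝ (Fin N)) :
    ε ^ (-(((N : ℝ) - 2) / 2)) * bubble N ε x =
      ((N : ℝ) * ((N : ℝ) - 2)) ^ (((N : ℝ) - 2) / 4) *
        (ε ^ 2 + ‖x‖ ^ 2) ^ (-(((N : ℝ) - 2) / 2)) := by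
  rw [eq_mul_rpow_neg hε, Real.rpow_neg hε.le]
  field_simp

end bubble

noncomputable def interactionKernel (N : ℕ) (ε : ℝ) (y : EuclideanSpace ℝ (Fin N)) : ℝ :=
  (ε ^ 2 + ‖y‖ ^ 2) ^ (-(((N : ℝ) - 2) / 2)) * (1 + ‖y‖ ^ 2) ^ (-(((N : ℝ) + 2) / 2))

theorem bubble_rpow_mul_bubble_smul_eq_interactionKernel {N : ℕ} (hN : 2 < N) {δ₁ δ₂ : ℝ}
    (h₁ : 0 < δ₁) (h₂ : 0 < δ₂) (y : EuclideanSpace ℝ (Fin N)) :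
    (δ₁ / δ₂) ^ (((N : ℝ) - 2) / 2) * δ₁ ^ N *
        (bubble N δ₁ (δ₁ • y) ^ (((N : ℝ) + 2) / ((N : ℝ) - 2)) * bubble N δ₂ (δ₁ • y)) =
      (((N : ℝ) * ((N : ℝ) - 2)) ^ (((N : ℝ) - 2) / 4)) ^ (2 * (N : ℝ) / ((N : ℝ) - 2)) *
        interactionKernel N (δ₂ / δ₁) y := by
  have hN' : (0 : ℝ) < (N : ℝ) - 2 := by
    have : (2 : ℝ) < N := by exact_mod_cast hN
    linarith
  set m := ((N : ℝ) - 2) / 2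
  set p := ((N : ℝ) + 2) / ((N : ℝ) - 2)
  set α := ((N : ℝ) * ((N : ℝ) - 2)) ^ (((N : ℝ) - 2) / 4)
  have hα : 0 < α := by positivity
  -- the powers of `δ₁` cancel because `N = m * p + m`
  have h_pow : δ₁ ^ N * (δ₁ ^ (-m)) ^ p * δ₁ ^ (-m) = 1 := by
    rw [← Real.rpow_natCast, ← Real.rpow_mul h₁.le, ← Real.rpow_add h₁, ← Real.rpow_add h₁]
    convert Real.rpow_zero δ₁ using 2
    simp only [m, p]
    field_simp
    ring
  have h_ratio : (δ₁ / δ₂) ^ m = (δ₂ / δ₁) ^ (-m) := by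
    rw [Real.rpow_neg (by positivity), ← Real.inv_rpow (by positivity), inv_div]
  have h_exp : α ^ (2 * (N : ℝ) / ((N : ℝ) - 2)) = α ^ p * α := by
    rw [← Real.rpow_add_one hα.ne']
    congr 1
    simp only [p]
    field_simp
    ring
  rw [bubble.smul h₁ h₁, div_self h₁.ne', bubble.smul h₂ h₁,
    Real.mul_rpow (by positivity) (bubble.nonneg hN.le zero_le_one y), bubble.one_rpow hN,
    h_ratio, h_exp]
  calc (δ₂ / δ₁) ^ (-m) * δ₁ ^ N *
        ((δ₁ ^ (-m)) ^ p * (α ^ p * (1 + ‖y‖ ^ 2) ^ (-(((N : ℝ) + 2) / 2))) *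
          (δ₁ ^ (-m) * bubble N (δ₂ / δ₁) y))
      = (δ₁ ^ N * (δ₁ ^ (-m)) ^ p * δ₁ ^ (-m)) * α ^ p *
          ((δ₂ / δ₁) ^ (-m) * bubble N (δ₂ / δ₁) y) *
          (1 + ‖y‖ ^ 2) ^ (-(((N : ℝ) + 2) / 2)) := by ring
    _ = α ^ p * α * interactionKernel N (δ₂ / δ₁) y := by
      rw [h_pow, bubble.rpow_neg_mul (div_pos h₂ h₁), interactionKernel]
      ring

theorem setIntegral_annulus_bubble_rpow_mul_bubble {N : ℕ} (hN : 2 < N) {δ₁ δ₂ : ℝ} (h₁ : 0 < δ₁)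
    (h₂ : 0 < δ₂) (a b : ℝ) :
    (δ₁ / δ₂) ^ (((N : ℝ) - 2) / 2) *
        ∫ x in annulus a b, bubble N δ₁ x ^ (((N : ℝ) + 2) / ((N : ℝ) - 2)) * bubble N δ₂ x =
      (((N : ℝ) * ((N : ℝ) - 2)) ^ (((N : ℝ) - 2) / 4)) ^ (2 * (N : ℝ) / ((N : ℝ) - 2)) *
        ∫ y in annulus (a / δ₁) (b / δ₁), interactionKernel N (δ₂ / δ₁) y := by
  have h_smul : δ₁ • (annulus (a / δ₁) (b / δ₁) : Set (EuclideanSpace ℝ (Fin N))) =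
      annulus a b := by
    rw [smul_annulus h₁, mul_div_cancel₀ _ h₁.ne', mul_div_cancel₀ _ h₁.ne']
  rw [← integral_const_mul (μ := volume.restrict (annulus (a / δ₁) (b / δ₁)))]
  simp_rw [← bubble_rpow_mul_bubble_smul_eq_interactionKernel hN h₁ h₂]
  rw [integral_const_mul, Measure.setIntegral_comp_smul_of_pos _
    (fun x => bubble N δ₁ x ^ (((N : ℝ) + 2) / ((N : ℝ) - 2)) * bubble N δ₂ x) _ h₁, h_smul,
    finrank_euclideanSpace_fin, smul_eq_mul, mul_assoc (_ ^ _), ← mul_assoc (δ₁ ^ N),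
    mul_inv_cancel₀ (by positivity), one_mul]

theorem interactionKernel_zero_apply {N : ℕ} (y : EuclideanSpace ℝ (Fin N)) :
    interactionKernel N 0 y =
      ‖y‖ ^ (-((N : ℝ) - 2)) * (1 + ‖y‖ ^ 2) ^ (-(((N : ℝ) + 2) / 2)) := by
  rw [interactionKernel, zero_pow two_ne_zero, zero_add, ← Real.rpow_natCast,
    ← Real.rpow_mul (norm_nonneg y)]
  congr 2
  push_cast
  ring

theorem measurable_interactionKernel {N : ℕ} (ε : ℝ) : Measurable (interactionKernel N ε) := by
  unfold interactionKernel
  fun_prop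

theorem norm_interactionKernel_le {N : ℕ} (hN : 2 ≤ N) (ε : ℝ) {y : EuclideanSpace ℝ (Fin N)}
    (hy : y ≠ 0) : ‖interactionKernel N ε y‖ ≤ interactionKernel N 0 y := by
  have : (2 : ℝ) ≤ N := by exact_mod_cast hN
  unfold interactionKernel
  rw [Real.norm_of_nonneg (by positivity)]
  refine mul_le_mul_of_nonneg_right ?_ (by positivity)
  exact Real.rpow_le_rpow_of_nonpos (by positivity) (by nlinarith [sq_nonneg ε]) (by linarith)

theorem tendsto_interactionKernel_nhds_zero {N : ℕ} {y : EuclideanSpace ℝ (Fin N)} (hy : y ≠ 0) :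
    Tendsto (fun ε => interactionKernel N ε y) (𝓝 0) (𝓝 (interactionKernel N 0 y)) := by
  have : ‖y‖ ^ 2 ≠ 0 := by positivity
  unfold interactionKernel
  refine ((Continuous.tendsto ?_ 0).rpow_const ?_).mul_const _
  · fun_prop
  · left
    simpa using this

theorem integrable_interactionKernel_zero {N : ℕ} (hN : 2 ≤ N) :
    Integrable (interactionKernel N 0) := by
  have : (2 : ℝ) ≤ N := by exact_mod_cast hN
  rw [show interactionKernel N 0 = _ from funext interactionKernel_zero_apply]
  exact integrable_norm_rpow_neg_mul_one_add_norm_sq_rpow (by linarith)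
    (by rw [finrank_euclideanSpace_fin]; linarith) (by rw [finrank_euclideanSpace_fin]; linarith)

/-- The leading-order interaction asymptotic in the proof of Proposition 4.1 of the
paper: for `N ≥ 7`, `p = (N+2)/(N-2)`, `ρ > 0` fixed, and sequences `δ₁ₖ, δ₂ₖ > 0`
with `δ₁ₖ → 0` and `δ₂ₖ/δ₁ₖ → 0`,
`(δ₁ₖ/δ₂ₖ)^((N-2)/2) ∫_{√(δ₁ₖδ₂ₖ) ≤ |x| ≤ ρ} U_{δ₁ₖ}^p U_{δ₂ₖ} →
  α_N^(2N/(N-2)) ∫_{ℝ^N} |y|^(-(N-2)) (1+|y|²)^(-(N+2)/2)`. -/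
theorem stmt_19 (N : ℕ) (hN : 7 ≤ N) (ρ : ℝ) (hρ : 0 < ρ)
    (δ₁ δ₂ : ℕ → ℝ) (hδ₁ : ∀ k, 0 < δ₁ k) (hδ₂ : ∀ k, 0 < δ₂ k)
    (h₁ : Tendsto δ₁ atTop (nhds 0))
    (h₂ : Tendsto (fun k => δ₂ k / δ₁ k) atTop (nhds 0)) :
    Tendsto
      (fun k =>
        (δ₁ k / δ₂ k) ^ (((N : ℝ) - 2) / 2) *
          ∫ x in {x : EuclideanSpace ℝ (Fin N) |
              Real.sqrt (δ₁ k * δ₂ k) ≤ ‖x‖ ∧ ‖x‖ ≤ ρ},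
            (bubble N (δ₁ k) x) ^ (((N : ℝ) + 2) / ((N : ℝ) - 2)) *
              bubble N (δ₂ k) x)
      atTop
      (nhds ((((N : ℝ) * ((N : ℝ) - 2)) ^ (((N : ℝ) - 2) / 4)) ^
          (2 * (N : ℝ) / ((N : ℝ) - 2)) *
        ∫ y : EuclideanSpace ℝ (Fin N),
          ‖y‖ ^ (-((N : ℝ) - 2)) * (1 + ‖y‖ ^ 2) ^ (-(((N : ℝ) + 2) / 2)))) := by
  have hN₂ : 2 < N := by omega
  have : Nonempty (Fin N) := ⟨⟨0, by omega⟩⟩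
  have h_rescale : ∀ k, (δ₁ k / δ₂ k) ^ (((N : ℝ) - 2) / 2) *
        ∫ x in annulus (Real.sqrt (δ₁ k * δ₂ k)) ρ,
          bubble N (δ₁ k) x ^ (((N : ℝ) + 2) / ((N : ℝ) - 2)) * bubble N (δ₂ k) x =
      (((N : ℝ) * ((N : ℝ) - 2)) ^ (((N : ℝ) - 2) / 4)) ^ (2 * (N : ℝ) / ((N : ℝ) - 2)) *
        ∫ y in annulus (Real.sqrt (δ₂ k / δ₁ k)) (ρ / δ₁ k),
          interactionKernel N (δ₂ k / δ₁ k) y := by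
    intro k
    have h_sqrt : Real.sqrt (δ₁ k * δ₂ k) / δ₁ k = Real.sqrt (δ₂ k / δ₁ k) := by
      rw [Real.sqrt_div' _ (hδ₁ k).le, Real.sqrt_mul (hδ₁ k).le,
        div_eq_div_iff (hδ₁ k).ne' (Real.sqrt_pos.2 (hδ₁ k)).ne', mul_right_comm,
        Real.mul_self_sqrt (hδ₁ k).le, mul_comm]
    rw [← h_sqrt]
    exact setIntegral_annulus_bubble_rpow_mul_bubble hN₂ (hδ₁ k) (hδ₂ k) _ _
  have h_ne : ∀ᵐ y : EuclideanSpace ℝ (Fin N), y ≠ 0 := compl_mem_ae_iff.2 (measure_singleton 0)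
  rw [← integral_congr_ae (ae_of_all _ interactionKernel_zero_apply)]
  refine (Tendsto.const_mul _ ?_).congr fun k => (h_rescale k).symm
  refine tendsto_setIntegral_annulus_of_dominated ?_ ?_ ?_ ?_
    (integrable_interactionKernel_zero hN₂.le) ?_
  · simpa using h₂.sqrt
  · exact (tendsto_inv_nhdsGT_zero.comp (tendsto_nhdsWithin_iff.2
      ⟨h₁, Eventually.of_forall hδ₁⟩)).const_mul_atTop hρ
  · exact Eventually.of_forall fun k => (measurable_interactionKernel _).aestronglyMeasurable
  · exact Eventually.of_forall fun k => h_ne.mono fun y hy => norm_interactionKernel_le hN₂.le _ hy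
  · exact h_ne.mono fun y hy => (tendsto_interactionKernel_nhds_zero hy).comp h₂
end
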